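/- arXiv:math/0302357 — 14 statements merged into one kernel-verified Lean document; each statement's English description precedes it below -/
import Mathlib

section
/- For all integers n₁, n₂, n₃ ≥ 0 there exist polynomials p, q, r ∈ ℂ[X], not all three zero, with deg p ≤ n₁, deg q ≤ n₂, deg r ≤ n₃, such that the entire function f(z) = p(z) + q(z)·e^z + r(z)·e^{2z} vanishes to order at least n₁+n₂+n₃+2 at z = 0, i.e. the k-th iterated derivative of f at 0 equals 0 for every k ≤ n₁+n₂+n₃+1. Moreover, such a triple is unique up to a common multiplicative factor: if (p,q,r) and (p',q',r') are two such triples, each with not all entries zero, then there exists a nonzero c ∈ ℂ with p' = c·p, q' = c·q and r' = c·r. -/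
/-!
Write the form as `f(z) = ∑ᵢ sᵢ(z) e^{cᵢ z}`. Since `(s e^{cz})' = (s' + c s) e^{cz}`, the `k`-th
derivative of `f` at `0` is `∑ᵢ eval 0 ((D + cᵢ)^k sᵢ)`, a linear functional of `(sᵢ)`; existence
is then a dimension count: `∑ (nᵢ + 1) = N + 3` coefficients against `N + 2` conditions.

Everything else rests on normality: for distinct exponents, a nonzero form cannot vanish to order
`∑ (nᵢ + 1)`. By induction on the number of exponents: multiplying by `e^{-c_a z}` moves `c_a` to
`0`, after which `n_a + 1` derivatives kill `s_a`, while each `D + (cᵢ - c_a)` is injective and does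
not raise degrees. For uniqueness, the `(N + 2)`-th derivatives `μ, μ'` at `0` of two forms `s, s'`
are then nonzero, and `μ s' - μ' s` vanishes to order `N + 3`, hence is zero.
-/

open Polynomial Finset

section CommRing

variable {R : Type*} [CommRing R]

-- `D + c`, the operator `d/dz` induces on `s` in `s(z) e^{cz}`
noncomputable def shiftedDerivative (c : R) : R[X] →ₗ[R] R[X] :=
  derivative + c • LinearMap.id

theorem shiftedDerivative_apply (c : R) (s : R[X]) :
    shiftedDerivative c s = derivative s + c • s := rfl

theorem shiftedDerivative_eq_add (b c : R) :
    shiftedDerivative c = shiftedDerivative b + (c - b) • 1 := by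
  refine LinearMap.ext fun s => ?_
  simp only [LinearMap.add_apply, LinearMap.smul_apply, Module.End.one_apply,
    shiftedDerivative_apply, sub_smul]
  abel

theorem shiftedDerivative_pow_eq_sum (b c : R) (k : ℕ) :
    shiftedDerivative c ^ k = ∑ i ∈ range (k + 1),
      ((k.choose i : R) * (c - b) ^ (k - i)) • shiftedDerivative b ^ i := by
  rw [shiftedDerivative_eq_add b c, ((Commute.one_right _).smul_right _).add_pow]
  refine sum_congr rfl fun i _ => ?_
  rw [_root_.smul_pow, one_pow, mul_smul_comm, mul_one, ← nsmul_eq_mul',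
    ← Nat.cast_smul_eq_nsmul R, smul_smul, mul_comm]

theorem degree_shiftedDerivative_le (c : R) (s : R[X]) :
    (shiftedDerivative c s).degree ≤ s.degree :=
  (degree_add_le _ _).trans (max_le degree_derivative_le (degree_smul_le _ _))

theorem degree_shiftedDerivative_pow_le (c : R) (m : ℕ) (s : R[X]) :
    ((shiftedDerivative c ^ m) s).degree ≤ s.degree := by
  induction m generalizing s with
  | zero => simp
  | succ m ih => exact (ih _).trans (degree_shiftedDerivative_le c s)

-- the `k`-th derivative at `0` of `z ↦ s(z) e^{cz}`
noncomputable def expMoment (c : R) (k : ℕ) : R[X] →ₗ[R] R :=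
  (leval 0).comp (shiftedDerivative c ^ k)

theorem expMoment_apply (c : R) (k : ℕ) (s : R[X]) :
    expMoment c k s = ((shiftedDerivative c ^ k) s).eval 0 := rfl

theorem expMoment_eq_sum (b c : R) (k : ℕ) (s : R[X]) :
    expMoment c k s = ∑ i ∈ range (k + 1),
      (k.choose i : R) * (c - b) ^ (k - i) * expMoment b i s := by
  simp [expMoment_apply, shiftedDerivative_pow_eq_sum b c, eval_finsetSum, LinearMap.sum_apply]

theorem expMoment_add (c : R) (m j : ℕ) (s : R[X]) :
    expMoment c (m + j) s = expMoment c j ((shiftedDerivative c ^ m) s) := by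
  rw [expMoment_apply, expMoment_apply, add_comm, pow_add, Module.End.mul_apply]

theorem shiftedDerivative_zero : shiftedDerivative (0 : R) = derivative :=
  LinearMap.ext fun s => by simp [shiftedDerivative_apply]

theorem expMoment_zero_left (j : ℕ) (s : R[X]) :
    expMoment 0 j s = (j.factorial : R) * s.coeff j := by
  rw [expMoment_apply, shiftedDerivative_zero, Module.End.coe_pow, ← coeff_zero_eq_eval_zero,
    coeff_iterate_derivative, zero_add, Nat.descFactorial_self, nsmul_eq_mul]

theorem expMoment_zero_of_degree_lt {j : ℕ} {s : R[X]} (hs : s.degree < j) :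
    expMoment 0 j s = 0 := by
  rw [expMoment_zero_left, coeff_eq_zero_of_degree_lt hs, mul_zero]

-- Leibniz rule for multiplication by `e^{-dz}`
theorem sum_expMoment_sub_eq_zero {ι : Type*} (t : Finset ι) (c : ι → R) (s : ι → R[X])
    (d : R) {M : ℕ} (h : ∀ k < M, ∑ i ∈ t, expMoment (c i) k (s i) = 0) :
    ∀ k < M, ∑ i ∈ t, expMoment (c i - d) k (s i) = 0 := by
  intro k hk
  rw [sum_congr rfl fun i _ => expMoment_eq_sum (c i) (c i - d) k (s i)]
  simp_rw [sub_sub_cancel_left]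
  rw [sum_comm]
  refine sum_eq_zero fun j hj => ?_
  rw [← mul_sum, h j (by have := mem_range.1 hj; omega), mul_zero]

variable [IsDomain R]

theorem shiftedDerivative_injective {c : R} (hc : c ≠ 0) :
    Function.Injective (shiftedDerivative c) := by
  rw [← LinearMap.ker_eq_bot, LinearMap.ker_eq_bot']
  intro s hs
  by_contra hne
  have hcs : c • s = -derivative s := eq_neg_of_add_eq_zero_right hs
  have := degree_derivative_lt hne
  rw [← degree_neg, ← hcs, smul_eq_C_mul, degree_C_mul hc] at this
  exact lt_irrefl _ this

theorem shiftedDerivative_pow_injective {c : R} (hc : c ≠ 0) (m : ℕ) :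
    Function.Injective (shiftedDerivative c ^ m) := by
  rw [Module.End.coe_pow]
  exact (shiftedDerivative_injective hc).iterate m

variable [CharZero R]

theorem eq_zero_of_expMoment_zero_eq_zero {s : R[X]} {n : ℕ} (hs : s.degree ≤ n)
    (h : ∀ j ≤ n, expMoment 0 j s = 0) : s = 0 := by
  ext j
  rcases le_or_gt j n with hj | hj
  · simpa [expMoment_zero_left, Nat.factorial_ne_zero] using h j hj
  · exact coeff_eq_zero_of_degree_lt (hs.trans_lt (by exact_mod_cast hj))

theorem eq_zero_of_sum_expMoment_eq_zero {ι : Type*} (n : ι → ℕ) (t : Finset ι) {c : ι → R}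
    (hc : Set.InjOn c t) {s : ι → R[X]} (hs : ∀ i ∈ t, (s i).degree ≤ n i)
    (h : ∀ k < ∑ i ∈ t, (n i + 1), ∑ i ∈ t, expMoment (c i) k (s i) = 0) :
    ∀ i ∈ t, s i = 0 := by
  classical
  induction t using Finset.induction_on generalizing c s with
  | empty => simp
  | insert a t ha ih =>
    rw [sum_insert ha] at h
    have hc' : Set.InjOn (fun i => c i - c a) t := fun i hi j hj hij =>
      hc (mem_insert_of_mem hi) (mem_insert_of_mem hj) (sub_left_injective hij)
    have hca : ∀ i ∈ t, c i - c a ≠ 0 := fun i hi => sub_ne_zero.2 fun hi' =>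
      ha (hc.eq_iff (mem_insert_of_mem hi) (mem_insert_self a t) |>.1 hi' ▸ hi)
    -- multiplying by `e^{-c_a z}` moves the exponent of `s a` to `0`
    have h₀ := sum_expMoment_sub_eq_zero _ c s (c a) h
    simp only [sum_insert ha, sub_self] at h₀
    -- `n a + 1` further derivatives kill `s a` and keep the degrees of the other terms
    have htail : ∀ i ∈ t, s i = 0 := by
      intro i hi
      refine shiftedDerivative_pow_injective (hca i hi) (n a + 1) ?_
      rw [map_zero]
      refine ih (c := fun i => c i - c a)
        (s := fun i => (shiftedDerivative (c i - c a) ^ (n a + 1)) (s i)) hc'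
        (fun i hi => (degree_shiftedDerivative_pow_le _ _ _).trans (hs i (mem_insert_of_mem hi)))
        (fun k hk => ?_) i hi
      have := h₀ (n a + 1 + k) (by omega)
      rw [expMoment_zero_of_degree_lt ((hs a (mem_insert_self a t)).trans_lt
        (by exact_mod_cast (by omega : n a < n a + 1 + k))), zero_add] at this
      simp_rw [expMoment_add] at this
      exact this
    have hhead : s a = 0 := by
      refine eq_zero_of_expMoment_zero_eq_zero (hs a (mem_insert_self a t)) fun j hj => ?_
      have := h₀ j (by omega)
      rwa [sum_eq_zero fun i hi => by rw [htail i hi, map_zero], add_zero] at this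
    intro i hi
    rcases mem_insert.1 hi with rfl | hi
    · exact hhead
    · exact htail i hi

end CommRing

section Field

variable {K : Type*} [Field K] {ι : Type*} [Fintype ι]

def IsExpPadeForm (c : ι → K) (n : ι → ℕ) (M : ℕ) (s : ι → K[X]) : Prop :=
  s ≠ 0 ∧ (∀ i, (s i).degree ≤ n i) ∧ ∀ k < M, ∑ i, expMoment (c i) k (s i) = 0

theorem exists_isExpPadeForm (c : ι → K) (n : ι → ℕ) {M : ℕ} (hM : M < ∑ i, (n i + 1)) :
    ∃ s, IsExpPadeForm c n M s := by
  let P : (Π i, Fin (n i + 1) → K) →ₗ[K] Π i, K[X] := LinearMap.pi fun i =>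
    (degreeLT K (n i + 1)).subtype ∘ₗ (degreeLTEquiv K (n i + 1)).symm.toLinearMap ∘ₗ
      LinearMap.proj i
  let L : (Π i, Fin (n i + 1) → K) →ₗ[K] Fin M → K :=
    LinearMap.pi fun k => ∑ i, expMoment (c i) k ∘ₗ LinearMap.proj i ∘ₗ P
  obtain ⟨v, hv, hv0⟩ := Submodule.exists_mem_ne_zero_of_ne_bot
    (L.ker_ne_bot_of_finrank_lt (by simpa [Module.finrank_pi_fintype] using hM))
  refine ⟨P v, fun hPv => hv0 (funext fun i => ?_), fun i => ?_, fun k hk => ?_⟩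
  · simpa [P] using congrFun hPv i
  · rw [← mem_degreeLE, ← degreeLT_succ_eq_degreeLE]
    exact ((degreeLTEquiv K _).symm (v i)).2
  · simpa [L] using congrFun hv ⟨k, hk⟩

theorem IsExpPadeForm.sum_expMoment_ne_zero [CharZero K] {c : ι → K} (hc : Function.Injective c)
    {n : ι → ℕ} {M : ℕ} (hM : M + 1 = ∑ i, (n i + 1)) {s : ι → K[X]}
    (hs : IsExpPadeForm c n M s) : ∑ i, expMoment (c i) M (s i) ≠ 0 := by
  intro h
  refine hs.1 (funext fun i => eq_zero_of_sum_expMoment_eq_zero n univ hc.injOn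
    (fun i _ => hs.2.1 i) (fun k hk => ?_) i (mem_univ i))
  rcases (Nat.lt_succ_iff.1 (hM ▸ hk)).lt_or_eq with hk | rfl
  · exact hs.2.2 k hk
  · exact h

theorem IsExpPadeForm.exists_eq_smul [CharZero K] {c : ι → K} (hc : Function.Injective c)
    {n : ι → ℕ} {M : ℕ} (hM : M + 1 = ∑ i, (n i + 1)) {s s' : ι → K[X]}
    (hs : IsExpPadeForm c n M s) (hs' : IsExpPadeForm c n M s') :
    ∃ a : K, a ≠ 0 ∧ s' = a • s := by
  set μ := ∑ i, expMoment (c i) M (s i)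
  set μ' := ∑ i, expMoment (c i) M (s' i)
  have hμ : μ ≠ 0 := hs.sum_expMoment_ne_zero hc hM
  -- `μ • s' - μ' • s` has one more vanishing moment than a form, so it cannot be a form
  have hcomb : μ • s' - μ' • s = 0 := by
    by_contra hne
    refine (IsExpPadeForm.sum_expMoment_ne_zero hc hM ⟨hne, fun i => ?_, fun k hk => ?_⟩) ?_
    · exact (degree_sub_le _ _).trans (max_le ((degree_smul_le _ _).trans (hs'.2.1 i))
        ((degree_smul_le _ _).trans (hs.2.1 i)))
    all_goals simp only [Pi.sub_apply, Pi.smul_apply, map_sub, map_smul, smul_eq_mul,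
      sum_sub_distrib, ← mul_sum]
    · rw [hs.2.2 k hk, hs'.2.2 k hk, mul_zero, mul_zero, sub_zero]
    · ring
  refine ⟨μ⁻¹ * μ', mul_ne_zero (inv_ne_zero hμ) (hs'.sum_expMoment_ne_zero hc hM), ?_⟩
  rw [mul_smul, ← sub_eq_zero.1 hcomb, inv_smul_smul₀ hμ]

end Field

theorem hasDerivAt_eval_mul_exp (c : ℂ) (s : ℂ[X]) (z : ℂ) :
    HasDerivAt (fun z => s.eval z * Complex.exp (c * z))
      ((shiftedDerivative c s).eval z * Complex.exp (c * z)) z := by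
  have hexp : HasDerivAt (fun z => Complex.exp (c * z)) (Complex.exp (c * z) * c) z := by
    simpa using ((hasDerivAt_id z).const_mul c).cexp
  refine ((s.hasDerivAt z).fun_mul hexp).congr_deriv ?_
  simp only [shiftedDerivative_apply, eval_add, eval_smul, smul_eq_mul]
  ring

theorem iteratedDeriv_sum_eval_mul_exp {ι : Type*} (t : Finset ι) (c : ι → ℂ) (s : ι → ℂ[X])
    (k : ℕ) :
    iteratedDeriv k (fun z => ∑ i ∈ t, (s i).eval z * Complex.exp (c i * z)) =
      fun z => ∑ i ∈ t, ((shiftedDerivative (c i) ^ k) (s i)).eval z * Complex.exp (c i * z) := by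
  induction k generalizing s with
  | zero => simp
  | succ k ih =>
    have hderiv : deriv (fun z => ∑ i ∈ t, (s i).eval z * Complex.exp (c i * z)) =
        fun z => ∑ i ∈ t, (shiftedDerivative (c i) (s i)).eval z * Complex.exp (c i * z) :=
      funext fun z => (HasDerivAt.fun_sum fun i _ => hasDerivAt_eval_mul_exp (c i) (s i) z).deriv
    rw [iteratedDeriv_succ', hderiv, ih]
    simp only [pow_succ, Module.End.mul_apply]

theorem iteratedDeriv_sum_eval_mul_exp_zero {ι : Type*} (t : Finset ι) (c : ι → ℂ)
    (s : ι → ℂ[X]) (k : ℕ) :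
    iteratedDeriv k (fun z => ∑ i ∈ t, (s i).eval z * Complex.exp (c i * z)) 0 =
      ∑ i ∈ t, expMoment (c i) k (s i) := by
  simp [iteratedDeriv_sum_eval_mul_exp, expMoment_apply]

theorem hermitePade_iff_isExpPadeForm (n₁ n₂ n₃ : ℕ) (s : Fin 3 → ℂ[X]) :
    (¬(s 0 = 0 ∧ s 1 = 0 ∧ s 2 = 0) ∧
      (s 0).degree ≤ (n₁ : ℕ) ∧ (s 1).degree ≤ (n₂ : ℕ) ∧ (s 2).degree ≤ (n₃ : ℕ) ∧
      ∀ k : ℕ, k ≤ n₁ + n₂ + n₃ + 1 →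
        iteratedDeriv k (fun z : ℂ => (s 0).eval z + (s 1).eval z * Complex.exp z +
          (s 2).eval z * Complex.exp (2 * z)) 0 = 0) ↔
      IsExpPadeForm ![0, 1, 2] ![n₁, n₂, n₃] (n₁ + n₂ + n₃ + 2) s := by
  have hf : (fun z : ℂ => (s 0).eval z + (s 1).eval z * Complex.exp z +
      (s 2).eval z * Complex.exp (2 * z)) =
      fun z => ∑ i, (s i).eval z * Complex.exp (![0, 1, 2] i * z) := by
    funext z
    simp [Fin.sum_univ_three]
  simp [hf, iteratedDeriv_sum_eval_mul_exp_zero, IsExpPadeForm, Fin.forall_fin_succ, funext_iff,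
    Nat.lt_succ_iff, and_assoc]

theorem hermite_pade_exists_unique (n₁ n₂ n₃ : ℕ) :
    (∃ p q r : ℂ[X], ¬(p = 0 ∧ q = 0 ∧ r = 0) ∧
      p.degree ≤ (n₁ : ℕ) ∧ q.degree ≤ (n₂ : ℕ) ∧ r.degree ≤ (n₃ : ℕ) ∧
      ∀ k : ℕ, k ≤ n₁ + n₂ + n₃ + 1 →
        iteratedDeriv k
          (fun z : ℂ => p.eval z + q.eval z * Complex.exp z + r.eval z * Complex.exp (2 * z))
          0 = 0) ∧
    (∀ p q r p' q' r' : ℂ[X],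
      (¬(p = 0 ∧ q = 0 ∧ r = 0) ∧
        p.degree ≤ (n₁ : ℕ) ∧ q.degree ≤ (n₂ : ℕ) ∧ r.degree ≤ (n₃ : ℕ) ∧
        ∀ k : ℕ, k ≤ n₁ + n₂ + n₃ + 1 →
          iteratedDeriv k
            (fun z : ℂ => p.eval z + q.eval z * Complex.exp z + r.eval z * Complex.exp (2 * z))
            0 = 0) →
      (¬(p' = 0 ∧ q' = 0 ∧ r' = 0) ∧
        p'.degree ≤ (n₁ : ℕ) ∧ q'.degree ≤ (n₂ : ℕ) ∧ r'.degree ≤ (n₃ : ℕ) ∧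
        ∀ k : ℕ, k ≤ n₁ + n₂ + n₃ + 1 →
          iteratedDeriv k
            (fun z : ℂ => p'.eval z + q'.eval z * Complex.exp z + r'.eval z * Complex.exp (2 * z))
            0 = 0) →
      ∃ c : ℂ, c ≠ 0 ∧ p' = C c * p ∧ q' = C c * q ∧ r' = C c * r) := by
  have hdim : n₁ + n₂ + n₃ + 2 + 1 = ∑ i, (![n₁, n₂, n₃] i + 1) := by
    simp [Fin.sum_univ_three]
    ring
  have hc : Function.Injective ![(0 : ℂ), 1, 2] := by
    intro i j h
    fin_cases i <;> fin_cases j <;> simp_all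
  refine ⟨?_, fun p q r p' q' r' h h' => ?_⟩
  · obtain ⟨s, hs⟩ := exists_isExpPadeForm ![(0 : ℂ), 1, 2] ![n₁, n₂, n₃]
      (M := n₁ + n₂ + n₃ + 2) (by omega)
    exact ⟨s 0, s 1, s 2, (hermitePade_iff_isExpPadeForm n₁ n₂ n₃ s).2 hs⟩
  · obtain ⟨a, ha, hsa⟩ := ((hermitePade_iff_isExpPadeForm n₁ n₂ n₃ ![p, q, r]).1 h).exists_eq_smul
      hc hdim ((hermitePade_iff_isExpPadeForm n₁ n₂ n₃ ![p', q', r']).1 h')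
    exact ⟨a, ha, by simpa [smul_eq_C_mul] using congrFun hsa 0,
      by simpa [smul_eq_C_mul] using congrFun hsa 1, by simpa [smul_eq_C_mul] using congrFun hsa 2⟩
end

section
/- Let w_k = 3^{−1/4}·e^{−(2k+1)πi/4} for k = 1, 2, 3, 4, and let z(w) = (w² − 1/3)/(w(w² − 1)). Then the four branch points are: z(w₁) = 3^{−1/4}e^{7πi/12}, z(w₂) = 3^{−1/4}e^{17πi/12}, z(w₃) = 3^{−1/4}e^{19πi/12}, and z(w₄) = 3^{−1/4}e^{5πi/12}. -/
/-- The rational map z(w) = (w² − 1/3)/(w(w² − 1)). -/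
noncomputable def zmap (w : ℂ) : ℂ := (w ^ 2 - 1 / 3) / (w * (w ^ 2 - 1))

/-- The positive real fourth root of 1/3, as a complex number. -/
noncomputable def c3 : ℂ := (((3 : ℝ) ^ (-(1 / 4) : ℝ) : ℝ) : ℂ)

/-- The critical points w_k = 3^{−1/4}·e^{−(2k+1)πi/4}. -/
noncomputable def wk (k : ℕ) : ℂ :=
  c3 * Complex.exp (-(2 * (k : ℂ) + 1) * Real.pi * Complex.I / 4)

/-! At a critical point `3 w⁴ + 1 = 0` one has `w² - 1/3 = w² (1 + w²)`, so
`z(w) = -w (1 + w²) / (1 - w²)`. For `w = w_k` we get `w² = ±i/√3 = i tan (±π/6)`, and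
`(1 + i tan φ) / (1 - i tan φ) = e^{2iφ}`; hence `z(w_k) = -w_k e^{±iπ/3}`, and the stated
angles follow modulo `2π`. -/

open Complex
open scoped Real

lemma zmap_eq_of_three_mul_pow_four_add_one_eq_zero {w : ℂ} (hw : 3 * w ^ 4 + 1 = 0) :
    zmap w = -w * ((1 + w ^ 2) / (1 - w ^ 2)) := by
  have hw0 : w ≠ 0 := by rintro rfl; norm_num at hw
  have hw1 : 1 - w ^ 2 ≠ 0 := fun h => by
    have : w ^ 2 = 1 := by linear_combination -h
    norm_num [show w ^ 4 = (w ^ 2) ^ 2 by ring, this] at hw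
  have hw2 : w ^ 2 - 1 ≠ 0 := fun h => hw1 (by linear_combination -h)
  unfold zmap
  field_simp
  linear_combination (w ^ 2 - 1) * hw

lemma one_add_tan_mul_I {φ : ℂ} (hφ : cos φ ≠ 0) : 1 + tan φ * I = exp (φ * I) / cos φ := by
  rw [exp_mul_I, tan_eq_sin_div_cos]
  field_simp

lemma one_add_tan_mul_I_div_one_sub_tan_mul_I {φ : ℂ} (hφ : cos φ ≠ 0) :
    (1 + tan φ * I) / (1 - tan φ * I) = exp (2 * φ * I) := by
  rw [sub_eq_add_neg, ← neg_mul, ← tan_neg, one_add_tan_mul_I hφ,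
    one_add_tan_mul_I (by rwa [cos_neg]), cos_neg, div_div_div_cancel_right₀ hφ, ← exp_sub]
  ring_nf

lemma zmap_eq_neg_mul_exp_of_sq_eq_tan_mul_I {w φ : ℂ} (hw : w ^ 2 = tan φ * I)
    (hφ : tan φ ^ 2 = 1 / 3) : zmap w = -w * exp (2 * φ * I) := by
  -- `tan φ = sin φ / cos φ` would be the junk value `0` if `cos φ = 0`.
  have hcos : cos φ ≠ 0 := fun h => by
    rw [tan_eq_sin_div_cos, h, div_zero] at hφ; norm_num at hφ
  have hcrit : 3 * w ^ 4 + 1 = 0 := by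
    rw [show w ^ 4 = (w ^ 2) ^ 2 by ring, hw]
    linear_combination (-3 : ℂ) * hφ + 3 * tan φ ^ 2 * I_sq
  rw [zmap_eq_of_three_mul_pow_four_add_one_eq_zero hcrit, hw,
    one_add_tan_mul_I_div_one_sub_tan_mul_I hcos]

lemma c3_sq : c3 ^ 2 = tan (π / 6) := by
  have h : ((3 : ℝ) ^ (-(1 / 4) : ℝ)) ^ 2 = Real.tan (π / 6) := by
    rw [Real.tan_pi_div_six, ← Real.rpow_natCast, ← Real.rpow_mul (by norm_num),
      show (-(1 / 4) : ℝ) * (2 : ℕ) = -(1 / 2) by norm_num, Real.rpow_neg (by norm_num),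
      Real.sqrt_eq_rpow, inv_eq_one_div]
  unfold c3
  rw [← ofReal_pow, h, ofReal_tan]
  push_cast; ring_nf

lemma tan_sq_pi_div_six : tan (π / 6) ^ 2 = 1 / 3 := by
  rw [← ofReal_ofNat, ← ofReal_div, ← ofReal_tan, Real.tan_pi_div_six]
  push_cast
  rw [div_pow, ← ofReal_pow, Real.sq_sqrt (by norm_num)]
  norm_num

lemma exp_neg_odd_mul_pi_mul_I_div_two (k : ℕ) :
    exp (-(2 * k + 1) * π * I / 2) = (-1) ^ (k + 1) * I := by
  have h : exp (-(2 * k + 1) * π * I / 2) = exp (((k + 1 : ℕ) : ℂ) * (π * I) + π / 2 * I) :=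
    exp_eq_exp_iff_exists_int.2 ⟨-(k + 1), by push_cast; ring⟩
  rw [h, exp_add, exp_nat_mul, exp_pi_mul_I, exp_pi_div_two_mul_I]

lemma wk_sq (k : ℕ) : wk k ^ 2 = tan ((-1) ^ (k + 1) * (π / 6)) * I := by
  have h : wk k ^ 2 = c3 ^ 2 * exp (-(2 * k + 1) * π * I / 2) := by
    rw [wk, mul_pow, ← exp_nat_mul]; ring_nf
  rw [h, c3_sq, exp_neg_odd_mul_pi_mul_I_div_two]
  rcases neg_one_pow_eq_or ℂ (k + 1) with hs | hs <;> simp [hs, tan_neg]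

lemma zmap_wk (k : ℕ) :
    zmap (wk k) = c3 * exp ((-(2 * k + 1) / 4 + 1 + (-1) ^ (k + 1) / 3) * π * I) := by
  have htan : tan ((-1) ^ (k + 1) * (π / 6)) ^ 2 = 1 / 3 := by
    rcases neg_one_pow_eq_or ℂ (k + 1) with hs | hs <;> simp [hs, tan_neg, tan_sq_pi_div_six]
  rw [zmap_eq_neg_mul_exp_of_sq_eq_tan_mul_I (wk_sq k) htan, wk,
    show ((-(2 * k + 1) / 4 + 1 + (-1) ^ (k + 1) / 3) * π * I : ℂ)
      = -(2 * k + 1) * π * I / 4 + 2 * ((-1) ^ (k + 1) * (π / 6)) * I + π * I by ring,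
    exp_add, exp_add, exp_pi_mul_I]
  ring

theorem branch_points_values :
    zmap (wk 1) = c3 * Complex.exp (7 * Real.pi * Complex.I / 12) ∧
    zmap (wk 2) = c3 * Complex.exp (17 * Real.pi * Complex.I / 12) ∧
    zmap (wk 3) = c3 * Complex.exp (19 * Real.pi * Complex.I / 12) ∧
    zmap (wk 4) = c3 * Complex.exp (5 * Real.pi * Complex.I / 12) := by
  refine ⟨?_, ?_, ?_, ?_⟩ <;> rw [zmap_wk] <;> congr 1 <;> refine exp_eq_exp_iff_exists_int.2 ?_
  · exact ⟨0, by push_cast; ring⟩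
  · exact ⟨-1, by push_cast; ring⟩
  · exact ⟨-1, by push_cast; ring⟩
  · exact ⟨-1, by push_cast; ring⟩
end

section
/- If w ∈ ℂ satisfies 3w⁴ + 1 = 0, then w ∉ {0, 1, −1}, and the number z = (w² − 1/3)/(w(w² − 1)) satisfies z¹² = −1/27; in particular |z| = 3^{−1/4}. -/
/-!
Put `ζ = (1 + 3w²)/2`. From `3w⁴ = -1` one gets `ζ² - ζ + 1 = 0`, so `ζ` is a primitive sixth
root of unity and `ζ³ = -1`. A direct computation modulo `3w⁴ + 1` gives `z⁴ = ζ/3`, hence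
`z¹² = ζ³/27 = -1/27` and `‖z‖ = 27^(-1/12) = 3^(-1/4)`.
-/

namespace BranchPoints

variable {K : Type*} [Field K]

def branchMap (w : K) : K := (w ^ 2 - 1 / 3) / (w * (w ^ 2 - 1))

section CriticalPoint

variable [CharZero K] {w : K} (h : 3 * w ^ 4 + 1 = 0)
include h

theorem sq_ne_one_of_critical : w ^ 2 ≠ 1 := by
  intro hw
  have : (4 : K) = 0 := by linear_combination h - (3 * w ^ 2 + 3) * hw
  norm_num at this

theorem ne_zero_of_critical : w ≠ 0 := by
  rintro rfl
  norm_num at h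

theorem branchMap_pow_four_of_critical : branchMap w ^ 4 = (1 + 3 * w ^ 2) / 6 := by
  have hden : w * (w ^ 2 - 1) ≠ 0 :=
    mul_ne_zero (ne_zero_of_critical h) (sub_ne_zero.2 (sq_ne_one_of_critical h))
  rw [branchMap, div_pow, div_eq_div_iff (pow_ne_zero 4 hden) (by norm_num)]
  linear_combination
    (2 / 27 - 8 / 9 * w ^ 2 + 25 / 9 * w ^ 4 - 13 / 3 * w ^ 6 + 11 / 3 * w ^ 8 - w ^ 10) * h

theorem half_one_add_three_sq_pow_three_of_critical : ((1 + 3 * w ^ 2) / 2) ^ 3 = -1 := by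
  linear_combination (9 + 9 * w ^ 2) / 8 * h

theorem branchMap_pow_twelve_of_critical : branchMap w ^ 12 = -1 / 27 := by
  calc branchMap w ^ 12 = (branchMap w ^ 4) ^ 3 := by ring
    _ = ((1 + 3 * w ^ 2) / 2) ^ 3 / 27 := by
      rw [branchMap_pow_four_of_critical h]; ring
    _ = -1 / 27 := by rw [half_one_add_three_sq_pow_three_of_critical h]

end CriticalPoint

end BranchPoints

theorem norm_eq_norm_rpow_inv_of_pow_eq {𝕜 : Type*} [NormedDivisionRing 𝕜] {z a : 𝕜} {n : ℕ}
    (hn : n ≠ 0) (h : z ^ n = a) : ‖z‖ = ‖a‖ ^ (n⁻¹ : ℝ) := by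
  rw [← h, norm_pow, Real.pow_rpow_inv_natCast (norm_nonneg z) hn]

open BranchPoints in
theorem branch_points_modulus (w : ℂ) (h : 3 * w ^ 4 + 1 = 0) :
    w ≠ 0 ∧ w ≠ 1 ∧ w ≠ -1 ∧
    ((w ^ 2 - 1 / 3) / (w * (w ^ 2 - 1))) ^ 12 = -1 / 27 ∧
    ‖(w ^ 2 - 1 / 3) / (w * (w ^ 2 - 1))‖ = (3 : ℝ) ^ (-(1 / 4) : ℝ) := by
  have hsq := sq_ne_one_of_critical h
  have hz := branchMap_pow_twelve_of_critical h
  refine ⟨ne_zero_of_critical h, fun hw => hsq (by simp [hw]), fun hw => hsq (by simp [hw]),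
    hz, ?_⟩
  have h27 : ‖(-1 / 27 : ℂ)‖ = (3 : ℝ) ^ (-3 : ℝ) := by norm_num
  refine (norm_eq_norm_rpow_inv_of_pow_eq (by norm_num) hz).trans ?_
  rw [h27, ← Real.rpow_mul (by norm_num)]
  norm_num
end

section
/- For every w ∈ ℂ with w ∉ {0, 1, −1}, setting z = (w² − 1/3)/(w(w² − 1)), the following identity holds: ((w² − 1/3)/(w² − 1))·exp(−2w²/(w² − 1)) = z·e^{3z}·w·exp(−(w + 1)(2w − 1)/(w(w − 1))). -/
theorem szego_jump_P (w : ℂ) (h0 : w ≠ 0) (h1 : w ≠ 1) (hm1 : w ≠ -1)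
    (z : ℂ) (hz : z = (w ^ 2 - 1 / 3) / (w * (w ^ 2 - 1))) :
    (w ^ 2 - 1 / 3) / (w ^ 2 - 1) * Complex.exp (-2 * w ^ 2 / (w ^ 2 - 1)) =
      z * Complex.exp (3 * z) * (w * Complex.exp (-((w + 1) * (2 * w - 1)) / (w * (w - 1)))) := by
  have hw1 : w - 1 ≠ 0 := sub_ne_zero.mpr h1
  have hwm1 : w + 1 ≠ 0 := by
    intro h; apply hm1; linear_combination h
  have hsq : w ^ 2 - 1 ≠ 0 := by
    intro h; apply hw1
    have : (w - 1) * (w + 1) = 0 := by linear_combination h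
    rcases mul_eq_zero.mp this with h' | h'
    · exact h'
    · exact absurd h' hwm1
  have e1 : (3 : ℂ) * z + -((w + 1) * (2 * w - 1)) / (w * (w - 1)) = -2 * w ^ 2 / (w ^ 2 - 1) := by
    rw [hz]; field_simp; ring
  have e2 : z * w = (w ^ 2 - 1 / 3) / (w ^ 2 - 1) := by
    rw [hz]; field_simp
  symm
  calc z * Complex.exp (3 * z) * (w * Complex.exp (-((w + 1) * (2 * w - 1)) / (w * (w - 1))))
      = z * w * Complex.exp (3 * z + -((w + 1) * (2 * w - 1)) / (w * (w - 1))) := by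
        rw [Complex.exp_add]; ring
    _ = (w ^ 2 - 1 / 3) / (w ^ 2 - 1) * Complex.exp (-2 * w ^ 2 / (w ^ 2 - 1)) := by
        rw [e1, e2]
end

section
/- Let U ⊆ ℂ be open, let z₀ ∈ U, and let w, L : U → ℂ be functions that are complex differentiable at z₀. Assume that for every z ∈ U one has z·w(z)³ − w(z)² − z·w(z) + 1/3 = 0, w(z)·(w(z)² − 1) ≠ 0, and exp(L(z)) = w(z)·(w(z)² − 1) (so L is a branch of log[w(w² − 1)]). Then the function z ↦ 3z·w(z) − L(z) is complex differentiable at z₀ with derivative equal to 3·w(z₀). -/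
/-!
Differentiating `exp L = w (w² - 1)` gives `w (w² - 1) L' = w' (3w² - 1)`, while the cubic says
`3w² - 1 = 3z · w (w² - 1)`. Hence `L' = 3z w'`, which cancels the `3z w'` coming from the
product rule in `(3z w)' = 3w + 3z w'`.
-/

open Filter Topology

theorem HasDerivAt.mul_sq_sub_one {𝕜 : Type*} [NontriviallyNormedField 𝕜] {w : 𝕜 → 𝕜}
    {w' x : 𝕜} (hw : HasDerivAt w w' x) :
    HasDerivAt (fun z => w z * (w z ^ 2 - 1)) (w' * (3 * w x ^ 2 - 1)) x := by
  refine (hw.mul ((hw.fun_pow 2).sub_const 1)).congr_deriv ?_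
  ring

theorem HasDerivAt.eq_mul_of_cexp_eventuallyEq {f L : ℂ → ℂ} {f' L' z₀ : ℂ}
    (hL : HasDerivAt L L' z₀) (hf : HasDerivAt f f' z₀)
    (h : ∀ᶠ z in 𝓝 z₀, Complex.exp (L z) = f z) : f' = f z₀ * L' := by
  rw [← h.self_of_nhds]
  exact hf.unique (hL.cexp.congr_of_eventuallyEq (h.mono fun _ hz => hz.symm))

theorem three_mul_sq_sub_one_eq_of_cubic {K : Type*} [Field K] [CharZero K] {z w : K}
    (h : z * w ^ 3 - w ^ 2 - z * w + 1 / 3 = 0) :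
    3 * w ^ 2 - 1 = 3 * z * (w * (w ^ 2 - 1)) := by
  linear_combination (-3 : K) * h

theorem hasDerivAt_g_integrand (U : Set ℂ) (hU : IsOpen U) (z₀ : ℂ) (hz₀ : z₀ ∈ U)
    (w L : ℂ → ℂ)
    (hw : DifferentiableAt ℂ w z₀) (hL : DifferentiableAt ℂ L z₀)
    (hcubic : ∀ z ∈ U, z * w z ^ 3 - w z ^ 2 - z * w z + 1 / 3 = 0)
    (hne : ∀ z ∈ U, w z * (w z ^ 2 - 1) ≠ 0)
    (hlog : ∀ z ∈ U, Complex.exp (L z) = w z * (w z ^ 2 - 1)) :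
    HasDerivAt (fun z : ℂ => 3 * z * w z - L z) (3 * w z₀) z₀ := by
  have hwD := hw.hasDerivAt
  have hLD := hL.hasDerivAt
  have hchain : deriv w z₀ * (3 * w z₀ ^ 2 - 1) = w z₀ * (w z₀ ^ 2 - 1) * deriv L z₀ :=
    hLD.eq_mul_of_cexp_eventuallyEq hwD.mul_sq_sub_one
      (eventually_of_mem (hU.mem_nhds hz₀) hlog)
  have hL' : deriv L z₀ = 3 * z₀ * deriv w z₀ := by
    refine mul_left_cancel₀ (hne z₀ hz₀) ?_
    rw [← hchain, three_mul_sq_sub_one_eq_of_cubic (hcubic z₀ hz₀)]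
    ring
  refine ((((hasDerivAt_id' z₀).const_mul 3).mul hwD).sub hLD).congr_deriv ?_
  rw [hL']
  ring
end

section
/- Let n ≥ 0 be an integer and let R > 1 be real. For every integer k with 0 ≤ k ≤ 3n + 1, the contour integral ∮_{|w|=R} w^k/(w(w² − 1))^{n+1} dw over the positively oriented circle of radius R centered at 0 equals 0, and for k = 3n + 2 it equals 2πi. -/
open Complex Metric Real Filter

private lemma mi_ne_zero (n : ℕ) {z : ℂ} (hz : 1 < ‖z‖) :
    (z * (z ^ 2 - 1)) ^ (n + 1) ≠ 0 := by
  apply pow_ne_zero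
  apply mul_ne_zero
  · intro h; rw [h] at hz; simp at hz; linarith
  · intro h
    rw [sub_eq_zero] at h
    have : ‖z ^ 2‖ = 1 := by rw [h]; simp
    rw [norm_pow] at this
    nlinarith

private lemma mi_diff (n : ℕ) (p : ℂ → ℂ) (hp : Differentiable ℂ p) {z : ℂ}
    (hz : 1 < ‖z‖) :
    DifferentiableAt ℂ (fun w => p w / (w * (w ^ 2 - 1)) ^ (n + 1)) z :=
  (hp z).div (by fun_prop) (mi_ne_zero n hz)

private lemma mi_denom_lb (n : ℕ) {z : ℂ} (hz : 2 ≤ ‖z‖) :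
    (‖z‖ ^ 3 / 2) ^ (n + 1) ≤ ‖(z * (z ^ 2 - 1)) ^ (n + 1)‖ := by
  rw [norm_pow, norm_mul]
  apply pow_le_pow_left₀ (by positivity)
  have h1 : ‖z ^ 2‖ - ‖(1 : ℂ)‖ ≤ ‖z ^ 2 - 1‖ := norm_sub_norm_le _ _
  rw [norm_pow, norm_one] at h1
  nlinarith [norm_nonneg z]

private lemma mi_frac_bound (n k : ℕ) (C : ℝ) (hC : 0 ≤ C) (hk : k + 2 ≤ 3 * (n + 1))
    {z : ℂ} (hz : 2 ≤ ‖z‖) (num : ℝ) (h0 : 0 ≤ num) (h : num ≤ C * ‖z‖ ^ k) :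
    num / ‖(z * (z ^ 2 - 1)) ^ (n + 1)‖ ≤ C * 2 ^ (n + 1) / ‖z‖ ^ 2 := by
  have hz0 : (0 : ℝ) < ‖z‖ := by linarith
  have hd := mi_denom_lb n hz
  have hdpos : (0 : ℝ) < (‖z‖ ^ 3 / 2) ^ (n + 1) := by positivity
  calc num / ‖(z * (z ^ 2 - 1)) ^ (n + 1)‖
      ≤ (C * ‖z‖ ^ k) / ((‖z‖ ^ 3 / 2) ^ (n + 1)) := div_le_div₀ (by positivity) h hdpos hd
    _ = C * ‖z‖ ^ k * 2 ^ (n + 1) / ‖z‖ ^ (3 * (n + 1)) := by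
        rw [div_pow, ← pow_mul, div_div_eq_mul_div, pow_mul]
    _ ≤ C * 2 ^ (n + 1) / ‖z‖ ^ 2 := by
        rw [div_le_div_iff₀ (by positivity) (by positivity)]
        have key : ‖z‖ ^ k * ‖z‖ ^ 2 ≤ ‖z‖ ^ (3 * (n + 1)) := by
          rw [← pow_add]
          exact pow_le_pow_right₀ (by linarith) hk
        calc C * ‖z‖ ^ k * 2 ^ (n + 1) * ‖z‖ ^ 2
            = (C * 2 ^ (n + 1)) * (‖z‖ ^ k * ‖z‖ ^ 2) := by ring
          _ ≤ (C * 2 ^ (n + 1)) * ‖z‖ ^ (3 * (n + 1)) := by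
              exact mul_le_mul_of_nonneg_left key (by positivity)
          _ = C * 2 ^ (n + 1) * ‖z‖ ^ (3 * (n + 1)) := by ring

private lemma mi_vanish {f : ℂ → ℂ} {A : ℝ} (hd : ∀ z : ℂ, 1 < ‖z‖ → DifferentiableAt ℂ f z)
    (hb : ∀ z : ℂ, 2 ≤ ‖z‖ → ‖f z‖ ≤ A / ‖z‖ ^ 2) {R : ℝ} (hR : 1 < R) :
    (∮ w in C(0, R), f w) = 0 := by
  have hR0 : 0 < R := by linarith
  have key : ∀ r : ℝ, R ≤ r → (∮ w in C(0, R), f w) = ∮ w in C(0, r), f w := by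
    intro r hr
    refine (circleIntegral_eq_of_differentiable_on_annulus_off_countable hR0 hr
      Set.countable_empty ?_ ?_).symm
    · intro z hz
      have h1 : 1 < ‖z‖ := by
        have := hz.2
        rw [mem_ball, dist_zero_right] at this
        push_neg at this
        linarith
      exact (hd z h1).continuousAt.continuousWithinAt
    · intro z hz
      apply hd
      have := hz.1.2
      rw [mem_closedBall, dist_zero_right] at this
      push_neg at this
      linarith
  have hnorm : ∀ r : ℝ, max R 2 ≤ r → ‖∮ w in C(0, R), f w‖ ≤ 2 * π * A / r := by
    intro r hr
    have hr2 : 2 ≤ r := le_trans (le_max_right _ _) hr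
    have hrR : R ≤ r := le_trans (le_max_left _ _) hr
    have hr0 : (0 : ℝ) < r := by linarith
    rw [key r hrR]
    have hb' : ∀ z ∈ sphere (0 : ℂ) r, ‖f z‖ ≤ A / r ^ 2 := by
      intro z hz
      rw [mem_sphere, dist_zero_right] at hz
      have := hb z (hz ▸ hr2)
      rwa [hz] at this
    have := circleIntegral.norm_integral_le_of_norm_le_const hr0.le hb'
    calc ‖∮ w in C(0, r), f w‖ ≤ 2 * π * r * (A / r ^ 2) := this
      _ = 2 * π * A / r := by field_simp
  have hT : Tendsto (fun r : ℝ => 2 * π * A / r) atTop (nhds 0) :=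
    tendsto_const_nhds.div_atTop tendsto_id
  have hle : ‖∮ w in C(0, R), f w‖ ≤ 0 :=
    ge_of_tendsto hT (eventually_atTop.mpr ⟨max R 2, hnorm⟩)
  exact norm_le_zero_iff.mp hle

theorem moment_integrals (n : ℕ) (R : ℝ) (hR : 1 < R) :
    (∀ k : ℕ, k ≤ 3 * n + 1 →
      (∮ w in C(0, R), w ^ k / (w * (w ^ 2 - 1)) ^ (n + 1)) = 0) ∧
    (∮ w in C(0, R), w ^ (3 * n + 2) / (w * (w ^ 2 - 1)) ^ (n + 1)) =
      2 * Real.pi * Complex.I := by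
  have hR0 : (0 : ℝ) < R := by linarith
  constructor
  · intro k hk
    refine mi_vanish (A := 2 ^ (n + 1)) (fun z hz => mi_diff n _ (by fun_prop) hz) ?_ hR
    intro z hz
    have : ‖z ^ k / (z * (z ^ 2 - 1)) ^ (n + 1)‖
        = ‖z‖ ^ k / ‖(z * (z ^ 2 - 1)) ^ (n + 1)‖ := by rw [norm_div, norm_pow]
    rw [this]
    have := mi_frac_bound n k 1 zero_le_one (by omega) hz (‖z‖ ^ k) (by positivity) (by simp)
    simpa using this
  · set g := fun w : ℂ => (w ^ (3 * n + 2) - w ^ n * (w ^ 2 - 1) ^ (n + 1)) /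
      (w * (w ^ 2 - 1)) ^ (n + 1) with hg
    have hsphere : ∀ z ∈ sphere (0 : ℂ) R, 1 < ‖z‖ := by
      intro z hz
      rw [mem_sphere, dist_zero_right] at hz
      linarith [hz]
    have heq : Set.EqOn (fun w : ℂ => w ^ (3 * n + 2) / (w * (w ^ 2 - 1)) ^ (n + 1) - w⁻¹)
        g (sphere 0 R) := by
      intro z hz
      have h1 := hsphere z hz
      have hz0 : z ≠ 0 := by intro h; rw [h] at h1; simp at h1; linarith
      have hd0 := mi_ne_zero n h1
      have h2 : (z ^ 2 - 1) ^ (n + 1) ≠ 0 := by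
        intro h
        exact hd0 (by rw [mul_pow, h, mul_zero])
      simp only [hg]
      rw [eq_div_iff hd0, sub_mul, div_mul_cancel₀ _ hd0, mul_pow, pow_succ]
      field_simp
      ring
    have hintF : CircleIntegrable
        (fun w : ℂ => w ^ (3 * n + 2) / (w * (w ^ 2 - 1)) ^ (n + 1)) 0 R := by
      apply ContinuousOn.circleIntegrable hR0.le
      intro z hz
      exact (mi_diff n (fun w => w ^ (3 * n + 2)) (by fun_prop)
        (hsphere z hz)).continuousAt.continuousWithinAt
    have hintInv : CircleIntegrable (fun w : ℂ => w⁻¹) 0 R := by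
      apply ContinuousOn.circleIntegrable hR0.le
      intro z hz
      have hz0 : z ≠ 0 := by
        intro h
        have := hsphere z hz
        rw [h] at this; simp at this; linarith
      exact (continuousAt_inv₀ hz0).continuousWithinAt
    have hgzero : (∮ w in C(0, R), g w) = 0 := by
      refine mi_vanish (A := (n + 1) * 2 ^ n * 2 ^ (n + 1))
        (fun z hz => mi_diff n _ (by fun_prop) hz) ?_ hR
      intro z hz
      have hz0 : (0 : ℝ) < ‖z‖ := by linarith
      have hnum : ‖z ^ (3 * n + 2) - z ^ n * (z ^ 2 - 1) ^ (n + 1)‖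
          ≤ ((n + 1 : ℝ) * 2 ^ n) * ‖z‖ ^ (3 * n) := by
        have hid : z ^ (3 * n + 2) - z ^ n * (z ^ 2 - 1) ^ (n + 1)
            = z ^ n * ((z ^ 2) ^ (n + 1) - (z ^ 2 - 1) ^ (n + 1)) := by ring
        rw [hid, norm_mul, norm_pow]
        have hgeom : (z ^ 2) ^ (n + 1) - (z ^ 2 - 1) ^ (n + 1)
            = ∑ i ∈ Finset.range (n + 1), (z ^ 2) ^ i * (z ^ 2 - 1) ^ (n - i) := by
          have h := geom_sum₂_mul (z ^ 2) (z ^ 2 - 1) (n + 1)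
          simp only [sub_sub_cancel, mul_one, Nat.add_sub_cancel] at h
          exact h.symm
        rw [hgeom]
        have hterm : ∀ i ∈ Finset.range (n + 1),
            ‖(z ^ 2) ^ i * (z ^ 2 - 1) ^ (n - i)‖ ≤ (2 * ‖z‖ ^ 2) ^ n := by
          intro i hi
          have hin : i ≤ n := by
            rw [Finset.mem_range] at hi; omega
          simp only [norm_mul, norm_pow]
          have e1 : ‖z‖ ^ 2 ≤ 2 * ‖z‖ ^ 2 := by nlinarith
          have e2 : ‖z ^ 2 - 1‖ ≤ 2 * ‖z‖ ^ 2 := by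
            calc ‖z ^ 2 - 1‖ ≤ ‖z ^ 2‖ + ‖(1 : ℂ)‖ := norm_sub_le _ _
              _ = ‖z‖ ^ 2 + 1 := by rw [norm_pow, norm_one]
              _ ≤ 2 * ‖z‖ ^ 2 := by nlinarith
          calc (‖z‖ ^ 2) ^ i * ‖z ^ 2 - 1‖ ^ (n - i)
              ≤ (2 * ‖z‖ ^ 2) ^ i * (2 * ‖z‖ ^ 2) ^ (n - i) := by
                apply mul_le_mul (pow_le_pow_left₀ (by positivity) e1 i)
                  (pow_le_pow_left₀ (norm_nonneg _) e2 (n - i)) (by positivity) (by positivity)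
            _ = (2 * ‖z‖ ^ 2) ^ n := by rw [← pow_add]; congr 1; omega
        calc ‖z‖ ^ n * ‖∑ i ∈ Finset.range (n + 1), (z ^ 2) ^ i * (z ^ 2 - 1) ^ (n - i)‖
            ≤ ‖z‖ ^ n * ∑ i ∈ Finset.range (n + 1), ‖(z ^ 2) ^ i * (z ^ 2 - 1) ^ (n - i)‖ := by
              exact mul_le_mul_of_nonneg_left (norm_sum_le _ _) (by positivity)
          _ ≤ ‖z‖ ^ n * ∑ _i ∈ Finset.range (n + 1), (2 * ‖z‖ ^ 2) ^ n := by
              exact mul_le_mul_of_nonneg_left (Finset.sum_le_sum hterm) (by positivity)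
          _ = ‖z‖ ^ n * ((n + 1 : ℝ) * (2 * ‖z‖ ^ 2) ^ n) := by
              rw [Finset.sum_const, Finset.card_range, nsmul_eq_mul]; push_cast; ring
          _ = ((n + 1 : ℝ) * 2 ^ n) * ‖z‖ ^ (3 * n) := by
              rw [mul_pow]; ring
      have : ‖g z‖ = ‖z ^ (3 * n + 2) - z ^ n * (z ^ 2 - 1) ^ (n + 1)‖ /
          ‖(z * (z ^ 2 - 1)) ^ (n + 1)‖ := by rw [hg, norm_div]
      rw [this]
      exact mi_frac_bound n (3 * n) ((n + 1 : ℝ) * 2 ^ n) (by positivity) (by omega) hz _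
        (norm_nonneg _) hnum
    have hsub := circleIntegral.integral_sub hintF hintInv
    rw [circleIntegral.integral_congr hR0.le heq, hgzero] at hsub
    have hinv : (∮ w in C(0, R), w⁻¹) = 2 * π * I := by
      have := circleIntegral.integral_sub_inv_of_mem_ball (c := (0:ℂ)) (w := 0) (R := R)
        (mem_ball_self hR0)
      simpa using this
    rw [hinv] at hsub
    linear_combination -hsub
end

section
/- Let n ≥ 1 be an integer and R > 1 real. Define E_n : ℂ → ℂ by E_n(z) = ((−1)^{n+1}·n!/(3n)^n)·(1/(2πi))·∮_{|w|=R} e^{3nzw}/(w(w² − 1))^{n+1} dw, the integral being over the positively oriented circle of radius R centered at 0. Then E_n(z)/z^{3n+2} tends to (−1)^{n+1}·n!·(3n)^{2n+2}/(3n+2)! as z → 0 with z ≠ 0. -/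
/-!
Expanding `exp (3n z w)` in powers of `z`, the coefficient of `z ^ k` is `(3n) ^ k / k!` times the
moment `∮ w ^ k / (w (w² - 1)) ^ (n + 1) dw`. Since the denominator has degree `3n + 3`, pushing the
contour to infinity shows that these moments vanish for `k ≤ 3n + 1` and equal `2πi` for
`k = 3n + 2`, while the Taylor remainder of order `3n + 3` is `O(z ^ (3n + 3))` uniformly on the
circle.
-/

open Filter Topology Complex Metric Finset Bornology Asymptotics
open scoped Nat Real

theorem circleIntegral_eq_two_pi_I_mul_of_tendsto_cobounded {c : ℂ} {R : ℝ} (h0 : 0 < R)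
    {f : ℂ → ℂ} {L : ℂ} (hf : DifferentiableOn ℂ f (ball c R)ᶜ)
    (hL : Tendsto (fun z => (z - c) * f z) (cobounded ℂ) (𝓝 L)) :
    (∮ z in C(c, R), f z) = 2 * π * I * L := by
  rw [← sub_eq_zero, ← norm_le_zero_iff]
  refine le_of_forall_gt_imp_ge_of_dense fun ε ε0 => ?_
  obtain ⟨r₀, -, hr₀⟩ := ((hasBasis_cobounded_compl_closedBall c).tendsto_iff nhds_basis_ball).1
    hL _ (div_pos ε0 Real.two_pi_pos)
  set r := max R r₀ + 1
  have hRr : R ≤ r := by linarith [le_max_left R r₀]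
  have hr0 : 0 < r := h0.trans_le hRr
  have hzne : ∀ z ∈ sphere c r, z ≠ c := fun z hz => ne_of_mem_sphere hz hr0.ne'
  have hf_sphere : ContinuousOn f (sphere c r) := hf.continuousOn.mono fun z hz => by
    simp only [Set.mem_compl_iff, mem_ball, not_lt, mem_sphere.1 hz, hRr]
  have hinv : ContinuousOn (fun z => L * (z - c)⁻¹) (sphere c r) := continuousOn_const.mul <|
    (continuousOn_id.sub continuousOn_const).inv₀ fun z hz => sub_ne_zero.2 (hzne z hz)
  -- The integral does not depend on the radius `r ≥ R`, and on a circle of large radius `r`,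
  -- `f z - L / (z - c)` has norm at most `ε / (2πr)`.
  calc ‖(∮ z in C(c, R), f z) - 2 * π * I * L‖
      = ‖(∮ z in C(c, r), f z) - ∮ z in C(c, r), L * (z - c)⁻¹‖ := by
        congr 2
        · exact (circleIntegral_eq_of_differentiable_on_annulus_off_countable h0 hRr
            Set.countable_empty (hf.continuousOn.mono fun z hz => hz.2) fun z hz =>
            hf.differentiableAt <| mem_of_superset (isClosed_closedBall.isOpen_compl.mem_nhds
              hz.1.2) (Set.compl_subset_compl.2 ball_subset_closedBall)).symm
        · rw [circleIntegral.integral_const_mul, circleIntegral.integral_sub_center_inv c hr0.ne',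
            mul_comm]
    _ = ‖∮ z in C(c, r), (f z - L * (z - c)⁻¹)‖ := by
        rw [circleIntegral.integral_sub (hf_sphere.circleIntegrable hr0.le)
          (hinv.circleIntegrable hr0.le)]
    _ ≤ 2 * π * r * (r⁻¹ * (ε / (2 * π))) := by
        refine circleIntegral.norm_integral_le_of_norm_le_const hr0.le fun z hz => ?_
        have hzc : z - c ≠ 0 := sub_ne_zero.2 (hzne z hz)
        rw [show f z - L * (z - c)⁻¹ = (z - c)⁻¹ * ((z - c) * f z - L) by field_simp, norm_mul,
          norm_inv, ← dist_eq_norm z c, mem_sphere.1 hz]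
        refine mul_le_mul_of_nonneg_left (mem_ball_iff_norm.1 (hr₀ z ?_)).le (inv_nonneg.2 hr0.le)
        simp only [Set.mem_compl_iff, mem_closedBall, not_le, mem_sphere.1 hz]
        linarith [le_max_right R r₀]
    _ = ε := by field_simp

section ExpCircleIntegral

variable {c : ℂ} {R : ℝ} {g : ℂ → ℂ}

theorem circleIntegral_exp_mul_eq_sum_add (hg : ContinuousOn g (sphere c |R|)) (u : ℂ) (m : ℕ) :
    (∮ w in C(c, R), exp (u * w) * g w) =
      ∑ k ∈ range m, u ^ k / k ! * (∮ w in C(c, R), w ^ k * g w) +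
        ∮ w in C(c, R), (exp (u * w) - ∑ k ∈ range m, (u * w) ^ k / k !) * g w := by
  have hint : ∀ k ∈ range m, CircleIntegrable (fun w => u ^ k / k ! * (w ^ k * g w)) c R :=
    fun k _ => (continuousOn_const.mul ((continuousOn_pow k).mul hg)).circleIntegrable'
  have hrem : CircleIntegrable
      (fun w => (exp (u * w) - ∑ k ∈ range m, (u * w) ^ k / k !) * g w) c R :=
    (ContinuousOn.mul (by fun_prop) hg).circleIntegrable'
  simp_rw [← circleIntegral.integral_const_mul]
  rw [← circleIntegral.integral_fun_sum hint,
    ← circleIntegral.integral_add (CircleIntegrable.fun_sum _ hint) hrem]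
  congr 1 with w
  rw [sub_mul, Finset.sum_mul, ← sum_congr rfl fun k _ =>
    (by ring : u ^ k / k ! * (w ^ k * g w) = (u * w) ^ k / k ! * g w), add_sub_cancel]

theorem isBigO_circleIntegral_exp_mul_sub_sum (hg : ContinuousOn g (sphere c |R|)) (m : ℕ) :
    (fun u => ∮ w in C(c, R), (exp (u * w) - ∑ k ∈ range m, (u * w) ^ k / k !) * g w)
      =O[𝓝 0] (· ^ m) := by
  obtain ⟨M, hM⟩ := (isCompact_sphere c |R|).exists_bound_of_continuousOn hg
  set ρ := ‖c‖ + |R|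
  refine .of_bound (2 * π * |R| * (ρ ^ m * Real.exp ρ * M)) ?_
  filter_upwards [closedBall_mem_nhds (0 : ℂ) one_pos] with u hu
  rw [mem_closedBall_zero_iff] at hu
  have hwρ : ∀ w ∈ sphere c |R|, ‖w‖ ≤ ρ := fun w hw => by
    simpa [ρ, ← mem_sphere_iff_norm.1 hw] using norm_le_norm_add_norm_sub' w c
  calc _ ≤ 2 * π * |R| * (‖u‖ ^ m * ρ ^ m * Real.exp ρ * M) :=
        circleIntegral.norm_integral_le_of_norm_le_const' fun w hw => by
          have huw : ‖u‖ * ‖w‖ ≤ ρ := by nlinarith [norm_nonneg u, norm_nonneg w, hwρ w hw]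
          have hwρ' := hwρ w hw
          rw [norm_mul]
          refine mul_le_mul ((norm_exp_sub_sum_le_norm_mul_exp _ m).trans ?_) (hM w hw)
            (norm_nonneg _) (by positivity)
          rw [norm_mul, mul_pow]
          gcongr
    _ = _ := by rw [norm_pow]; ring

theorem tendsto_circleIntegral_exp_mul_div_pow (hg : ContinuousOn g (sphere c |R|)) (a : ℂ)
    {N : ℕ} (hm : ∀ k < N, (∮ w in C(c, R), w ^ k * g w) = 0) :
    Tendsto (fun z => (∮ w in C(c, R), exp (a * z * w) * g w) / z ^ N) (𝓝[≠] 0)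
      (𝓝 (a ^ N * (∮ w in C(c, R), w ^ N * g w) / N !)) := by
  set rem := fun u =>
    ∮ w in C(c, R), (exp (u * w) - ∑ k ∈ range (N + 1), (u * w) ^ k / k !) * g w
  have hsplit : ∀ z, (∮ w in C(c, R), exp (a * z * w) * g w) =
      (a * z) ^ N / N ! * (∮ w in C(c, R), w ^ N * g w) + rem (a * z) := fun z => by
    rw [circleIntegral_exp_mul_eq_sum_add hg _ (N + 1), sum_range_succ,
      sum_eq_zero fun k hk => by rw [hm k (mem_range.1 hk), mul_zero], zero_add]
  have hO : (fun z => rem (a * z)) =O[𝓝 0] (· ^ (N + 1)) := by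
    have ha : Tendsto (a * ·) (𝓝 0) (𝓝 0) := (continuous_const_mul a).tendsto' 0 0 (mul_zero a)
    refine ((isBigO_circleIntegral_exp_mul_sub_sum hg (N + 1)).comp_tendsto ha).trans ?_
    exact (isBigO_const_mul_self (a ^ (N + 1)) (· ^ (N + 1)) _).congr_left fun z =>
      (mul_pow a z _).symm
  have hrem : Tendsto (fun z => rem (a * z) / z ^ N) (𝓝[≠] 0) (𝓝 0) := by
    refine (((hO.mono nhdsWithin_le_nhds).mul (isBigO_refl (fun z : ℂ => (z ^ N)⁻¹) _)).congr'
      (.of_eq rfl) ?_).trans_tendsto (tendsto_id.mono_left nhdsWithin_le_nhds)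
    filter_upwards [self_mem_nhdsWithin] with z (hz : z ≠ 0)
    field_simp
    rw [pow_succ, id]
  have := hrem.const_add (a ^ N * (∮ w in C(c, R), w ^ N * g w) / N !)
  rw [add_zero] at this
  refine this.congr' ?_
  filter_upwards [self_mem_nhdsWithin] with z (hz : z ≠ 0)
  rw [hsplit, add_div, mul_pow]
  field_simp

end ExpCircleIntegral

theorem differentiableOn_inv_mul_sq_sub_one_pow (n : ℕ) :
    DifferentiableOn ℂ (fun w : ℂ => ((w * (w ^ 2 - 1)) ^ (n + 1))⁻¹) (closedBall 0 1)ᶜ := by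
  intro w hw
  have hw1 : 1 < ‖w‖ := by simpa using hw
  have hw0 : w ≠ 0 := norm_pos_iff.1 (one_pos.trans hw1)
  have hw2 : w ^ 2 - 1 ≠ 0 := fun h => by
    have : ‖w‖ ^ 2 = 1 := by rw [← norm_pow, sub_eq_zero.1 h, norm_one]
    nlinarith
  exact (by fun_prop (disch := exact pow_ne_zero _ (mul_ne_zero hw0 hw2)) :
    DifferentiableAt ℂ (fun w : ℂ => ((w * (w ^ 2 - 1)) ^ (n + 1))⁻¹) w).differentiableWithinAt

theorem tendsto_mul_pow_mul_inv_mul_sq_sub_one_pow {n k : ℕ} (hk : k ≤ 3 * n + 2) :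
    Tendsto (fun w : ℂ => w * (w ^ k * ((w * (w ^ 2 - 1)) ^ (n + 1))⁻¹)) (cobounded ℂ)
      (𝓝 (0 ^ (3 * n + 2 - k))) := by
  obtain ⟨m, hm⟩ := Nat.exists_eq_add_of_le hk
  have hcont : ContinuousAt (fun u : ℂ => u ^ m * ((1 - u ^ 2) ^ (n + 1))⁻¹) 0 :=
    by fun_prop (disch := simp)
  have h : Tendsto (fun w : ℂ => w⁻¹ ^ m * ((1 - w⁻¹ ^ 2) ^ (n + 1))⁻¹) (cobounded ℂ)
      (𝓝 (0 ^ m)) := by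
    simpa only [Function.comp_def, ne_eq, OfNat.ofNat_ne_zero, not_false_eq_true, zero_pow,
      sub_zero, one_pow, inv_one, mul_one] using hcont.tendsto.comp tendsto_inv₀_cobounded
  rw [hm, Nat.add_sub_cancel_left]
  refine h.congr' ?_
  filter_upwards [eventually_ne_cobounded 0] with w hw
  rw [show 1 - w⁻¹ ^ 2 = w * (w ^ 2 - 1) * (w ^ 3)⁻¹ by field_simp, mul_pow, mul_inv, inv_pow,
    inv_pow, inv_inv, ← pow_mul, show 3 * (n + 1) = k + 1 + m by omega, pow_add, pow_add]
  field_simp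
  ring

theorem circleIntegral_pow_mul_inv_mul_sq_sub_one_pow {n k : ℕ} (hk : k ≤ 3 * n + 2) {R : ℝ}
    (hR : 1 < R) :
    (∮ w in C(0, R), w ^ k * ((w * (w ^ 2 - 1)) ^ (n + 1))⁻¹) = 2 * π * I * 0 ^ (3 * n + 2 - k) :=
  circleIntegral_eq_two_pi_I_mul_of_tendsto_cobounded (by linarith)
    (((differentiable_pow k).differentiableOn.mul (differentiableOn_inv_mul_sq_sub_one_pow n)).mono
      (Set.compl_subset_compl.2 (closedBall_subset_ball hR)))
    (by simpa only [sub_zero] using tendsto_mul_pow_mul_inv_mul_sq_sub_one_pow hk)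

theorem remainder_leading_coefficient_general (n : ℕ) (R : ℝ) (hR : 1 < R) :
    Tendsto
      (fun z : ℂ =>
        ((-1 : ℂ) ^ (n + 1) * (n.factorial : ℂ) / (3 * (n : ℂ)) ^ n *
            (1 / (2 * Real.pi * Complex.I)) *
            ∮ w in C(0, R), Complex.exp (3 * (n : ℂ) * z * w) / (w * (w ^ 2 - 1)) ^ (n + 1)) /
          z ^ (3 * n + 2))
      (nhdsWithin 0 {(0 : ℂ)}ᶜ)
      (nhds ((-1 : ℂ) ^ (n + 1) * (n.factorial : ℂ) * (3 * (n : ℂ)) ^ (2 * n + 2) /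
        ((3 * n + 2).factorial : ℂ))) := by
  have hg : ContinuousOn (fun w : ℂ => ((w * (w ^ 2 - 1)) ^ (n + 1))⁻¹) (sphere 0 |R|) := by
    refine (differentiableOn_inv_mul_sq_sub_one_pow n).continuousOn.mono fun w hw => ?_
    rw [abs_of_pos (by linarith), mem_sphere_zero_iff_norm] at hw
    simpa [hw] using hR
  have hlim := tendsto_circleIntegral_exp_mul_div_pow hg (3 * n) (N := 3 * n + 2) fun k hk => by
    rw [circleIntegral_pow_mul_inv_mul_sq_sub_one_pow hk.le hR, zero_pow (by omega), mul_zero]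
  rw [circleIntegral_pow_mul_inv_mul_sq_sub_one_pow le_rfl hR, Nat.sub_self, pow_zero,
    mul_one] at hlim
  have h3n : (3 * (n : ℂ)) ^ n ≠ 0 := by
    rcases n.eq_zero_or_pos with rfl | hn
    · simp
    · exact pow_ne_zero _ (mul_ne_zero three_ne_zero (Nat.cast_ne_zero.2 hn.ne'))
  set K := (-1 : ℂ) ^ (n + 1) * n ! / (3 * n) ^ n * (1 / (2 * π * I))
  simp only [div_eq_mul_inv (exp _), mul_div_assoc]
  convert hlim.const_mul K using 2
  simp only [K]
  field_simp
  ring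

theorem remainder_leading_coefficient (n : ℕ) (hn : 1 ≤ n) (R : ℝ) (hR : 1 < R) :
    Tendsto
      (fun z : ℂ =>
        ((-1 : ℂ) ^ (n + 1) * (n.factorial : ℂ) / (3 * (n : ℂ)) ^ n *
            (1 / (2 * Real.pi * Complex.I)) *
            ∮ w in C(0, R), Complex.exp (3 * (n : ℂ) * z * w) / (w * (w ^ 2 - 1)) ^ (n + 1)) /
          z ^ (3 * n + 2))
      (nhdsWithin 0 {(0 : ℂ)}ᶜ)
      (nhds ((-1 : ℂ) ^ (n + 1) * (n.factorial : ℂ) * (3 * (n : ℂ)) ^ (2 * n + 2) /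
        ((3 * n + 2).factorial : ℂ))) :=
  remainder_leading_coefficient_general n R hR
end

section
/- Let n ≥ 1 be an integer and let 0 < ε < 1. Then there exists a polynomial p ∈ ℂ[X] of degree exactly n with leading coefficient (3n)^n/(2^{n+1}·n!) such that for every z ∈ ℂ: e^{3nz}·(1/(2πi))·∮_{|w+1|=ε} e^{3nzw}/(w(w² − 1))^{n+1} dw = p(z), the integral being over the positively oriented circle of radius ε centered at −1. -/
open Polynomial Complex Metric Finset
open scoped Nat Real

/-!
Since `w (w² - 1) = (w + 1) · w (w - 1)`, the integrand is `e^{3nzw} g(w) / (w + 1)^{n+1}` with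
`g(w) = (w (w - 1))^{-(n+1)}` holomorphic on the closed disc `|w + 1| ≤ ε < 1`. Cauchy's formula
turns the integral into `2πi/n!` times the `n`-th derivative of `e^{3nzw} g(w)` at `w = -1`, which by
Leibniz's rule is `e^{-3nz}` times a polynomial in `z` of degree `n` with leading coefficient
`(3n)^n g(-1) / n!`, and `g(-1) = 2^{-(n+1)}`.
-/

/-- `n! e^{bzc} · (leibnizExpPoly g c b n).eval z` is the Leibniz expansion of the `n`-th derivative
of `w ↦ e^{bzw} g(w)` at `c`. -/
noncomputable def leibnizExpPoly (g : ℂ → ℂ) (c b : ℂ) (n : ℕ) : ℂ[X] :=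
  ∑ k ∈ range (n + 1), C (n.choose k * b ^ k * iteratedDeriv (n - k) g c / n !) * X ^ k

section leibnizExpPoly

variable (g : ℂ → ℂ) (c b : ℂ) (n : ℕ)

lemma eval_leibnizExpPoly (z : ℂ) :
    (leibnizExpPoly g c b n).eval z =
      (n ! : ℂ)⁻¹ * ∑ k ∈ range (n + 1), n.choose k * (b * z) ^ k * iteratedDeriv (n - k) g c := by
  simp only [leibnizExpPoly, eval_finsetSum, eval_mul, eval_C, eval_pow, eval_X, mul_sum]
  refine sum_congr rfl fun k _ => ?_
  ring

lemma coeff_leibnizExpPoly_self : (leibnizExpPoly g c b n).coeff n = b ^ n * g c / n ! := by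
  simp [leibnizExpPoly]

variable {g c b n}

lemma degree_leibnizExpPoly (h : b ^ n * g c ≠ 0) : (leibnizExpPoly g c b n).degree = n := by
  refine degree_eq_of_le_of_coeff_ne_zero ?_ ?_
  · refine (degree_sum_le _ _).trans (Finset.sup_le fun k hk => ?_)
    exact (degree_C_mul_X_pow_le _ _).trans (mod_cast Nat.lt_succ_iff.mp (mem_range.mp hk))
  · rw [coeff_leibnizExpPoly_self]
    exact div_ne_zero h (mod_cast n.factorial_ne_zero)

lemma leadingCoeff_leibnizExpPoly (h : b ^ n * g c ≠ 0) :
    (leibnizExpPoly g c b n).leadingCoeff = b ^ n * g c / n ! := by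
  rw [leadingCoeff, natDegree_eq_of_degree_eq_some (degree_leibnizExpPoly h),
    coeff_leibnizExpPoly_self]

end leibnizExpPoly

lemma iteratedDeriv_cexp_const_mul_mul {g : ℂ → ℂ} {x : ℂ} {n : ℕ} (a : ℂ)
    (hg : ContDiffAt ℂ n g x) :
    iteratedDeriv n (fun w => exp (a * w) * g w) x =
      exp (a * x) * ∑ k ∈ range (n + 1), n.choose k * a ^ k * iteratedDeriv (n - k) g x := by
  rw [iteratedDeriv_fun_mul (by fun_prop) hg, mul_sum]
  refine sum_congr rfl fun k _ => ?_
  rw [iteratedDeriv_cexp_const_mul]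
  ring

lemma circleIntegral_cexp_mul_div_sub_pow {g : ℂ → ℂ} {c : ℂ} {R : ℝ} (hR : 0 < R)
    (hg : DifferentiableOn ℂ g (closedBall c R)) (b z : ℂ) (n : ℕ) :
    (2 * π * I)⁻¹ * ∮ w in C(c, R), exp (b * z * w) * g w / (w - c) ^ (n + 1) =
      exp (b * z * c) * (leibnizExpPoly g c b n).eval z := by
  have hF : DifferentiableOn ℂ (fun w => exp (b * z * w) * g w) (closedBall c R) :=
    (by fun_prop : Differentiable ℂ fun w => exp (b * z * w)).differentiableOn.mul hg
  have hgc : ContDiffAt ℂ n g c := (hg.analyticAt (closedBall_mem_nhds c hR)).contDiffAt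
  calc (2 * π * I)⁻¹ * ∮ w in C(c, R), exp (b * z * w) * g w / (w - c) ^ (n + 1)
      = (2 * π * I)⁻¹ * ∮ w in C(c, R), (1 / (w - c) ^ (n + 1)) • (exp (b * z * w) * g w) := by
        simp only [smul_eq_mul, one_div_mul_eq_div]
    _ = (n ! : ℂ)⁻¹ * iteratedDeriv n (fun w => exp (b * z * w) * g w) c := by
        rw [hF.circleIntegral_one_div_sub_center_pow_smul hR n, smul_eq_mul]
        field_simp [two_pi_I_ne_zero]
    _ = exp (b * z * c) * (leibnizExpPoly g c b n).eval z := by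
        rw [iteratedDeriv_cexp_const_mul_mul _ hgc, eval_leibnizExpPoly]
        ring

theorem Pn_is_polynomial_general (n : ℕ) (ε : ℝ) (hε0 : 0 < ε) (hε1 : ε < 1) :
    ∃ p : ℂ[X], p.degree = (n : ℕ) ∧
      p.leadingCoeff = (3 * (n : ℂ)) ^ n / (2 ^ (n + 1) * (n.factorial : ℂ)) ∧
      ∀ z : ℂ,
        Complex.exp (3 * (n : ℂ) * z) * (1 / (2 * Real.pi * Complex.I)) *
          (∮ w in C(-1, ε), Complex.exp (3 * (n : ℂ) * z * w) / (w * (w ^ 2 - 1)) ^ (n + 1)) =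
        p.eval z := by
  set g : ℂ → ℂ := fun w => ((w * (w - 1)) ^ (n + 1))⁻¹
  have hg : DifferentiableOn ℂ g (closedBall (-1) ε) := by
    refine DifferentiableOn.inv (by fun_prop) fun w hw =>
      pow_ne_zero _ (mul_ne_zero ?_ (sub_ne_zero.mpr ?_))
    all_goals
      rintro rfl
      norm_num [Complex.dist_eq] at hw
      linarith
  have hg_neg_one : g (-1) = (2 ^ (n + 1))⁻¹ := by norm_num [g]
  have hlead : (3 * (n : ℂ)) ^ n * g (-1) ≠ 0 := by
    rw [hg_neg_one]
    rcases n.eq_zero_or_pos with rfl | hn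
    · norm_num
    · exact mul_ne_zero (pow_ne_zero _ (by norm_cast; omega)) (by norm_num)
  refine ⟨leibnizExpPoly g (-1) (3 * n) n, degree_leibnizExpPoly hlead, ?_, fun z => ?_⟩
  · rw [leadingCoeff_leibnizExpPoly hlead, hg_neg_one]
    field_simp
  · have hintegrand : (fun w => exp (3 * n * z * w) / (w * (w ^ 2 - 1)) ^ (n + 1)) =
        fun w => exp (3 * n * z * w) * g w / (w - -1) ^ (n + 1) := by
      funext w
      rw [show w * (w ^ 2 - 1) = w * (w - 1) * (w - -1) by ring, mul_pow, div_eq_mul_inv,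
        mul_inv]
      ring
    rw [hintegrand, one_div, mul_assoc, circleIntegral_cexp_mul_div_sub_pow hε0 hg, ← mul_assoc,
      ← Complex.exp_add, show 3 * n * z + 3 * n * z * -1 = 0 by ring, Complex.exp_zero, one_mul]

theorem Pn_is_polynomial (n : ℕ) (hn : 1 ≤ n) (ε : ℝ) (hε0 : 0 < ε) (hε1 : ε < 1) :
    ∃ p : ℂ[X], p.degree = (n : ℕ) ∧
      p.leadingCoeff = (3 * (n : ℂ)) ^ n / (2 ^ (n + 1) * (n.factorial : ℂ)) ∧
      ∀ z : ℂ,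
        Complex.exp (3 * (n : ℂ) * z) * (1 / (2 * Real.pi * Complex.I)) *
          (∮ w in C(-1, ε), Complex.exp (3 * (n : ℂ) * z * w) / (w * (w ^ 2 - 1)) ^ (n + 1)) =
        p.eval z :=
  Pn_is_polynomial_general n ε hε0 hε1
end

section
/- Let n ≥ 1 be an integer and let 0 < ε < 1. Then there exists a polynomial q ∈ ℂ[X] of degree exactly n with leading coefficient (−1)^{n+1}·(3n)^n/n! such that for every z ∈ ℂ: (1/(2πi))·∮_{|w|=ε} e^{3nzw}/(w(w² − 1))^{n+1} dw = q(z), the integral being over the positively oriented circle of radius ε centered at 0. -/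
/-! By Cauchy's formula for derivatives, `(2πi)⁻¹ ∮ e^{cw} g(w) / w^{n+1} dw` is the `n`-th
Taylor coefficient at `0` of `e^{cw} g(w)`, where `g(w) = (w² - 1)^{-(n+1)}` is holomorphic on the
closed disc of radius `ε < 1`. By Leibniz's rule this coefficient is the Cauchy product
`∑_{i ≤ n} c^i / i! · g_{n-i}` of the Taylor coefficients of `e^{cw}` and `g`, which for
`c = 3nz` is a polynomial in `z` of degree `n` with top coefficient
`(3n)^n / n! · g(0) = (-1)^{n+1} (3n)^n / n!`. -/

open Polynomial

namespace Polynomial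

variable {R : Type*} [Semiring R]

theorem coeff_sum_range_C_mul_X_pow (b : ℕ → R) (n m : ℕ) :
    (∑ i ∈ Finset.range (n + 1), C (b i) * X ^ i).coeff m = if m ≤ n then b m else 0 := by
  simp only [finsetSum_coeff, coeff_C_mul_X_pow, Finset.sum_ite_eq, Finset.mem_range,
    Nat.lt_succ_iff]

theorem degree_sum_range_C_mul_X_pow {b : ℕ → R} {n : ℕ} (hb : b n ≠ 0) :
    (∑ i ∈ Finset.range (n + 1), C (b i) * X ^ i).degree = (n : WithBot ℕ) := by
  refine degree_eq_of_le_of_coeff_ne_zero ((degree_le_iff_coeff_zero _ _).2 fun m hm => ?_) ?_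
  · rw [coeff_sum_range_C_mul_X_pow, if_neg (by exact_mod_cast hm.not_ge)]
  · rwa [coeff_sum_range_C_mul_X_pow, if_pos le_rfl]

theorem leadingCoeff_sum_range_C_mul_X_pow {b : ℕ → R} {n : ℕ} (hb : b n ≠ 0) :
    (∑ i ∈ Finset.range (n + 1), C (b i) * X ^ i).leadingCoeff = b n := by
  rw [leadingCoeff, natDegree_eq_of_degree_eq_some (degree_sum_range_C_mul_X_pow hb),
    coeff_sum_range_C_mul_X_pow, if_pos le_rfl]

end Polynomial

theorem sq_sub_one_ne_zero_of_norm_lt_one {w : ℂ} (hw : ‖w‖ < 1) : w ^ 2 - 1 ≠ 0 := by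
  intro h
  have : ‖w‖ ^ 2 = 1 := by rw [← norm_pow, sub_eq_zero.1 h, norm_one]
  nlinarith [norm_nonneg w]

section CauchyFormula

open Complex Metric Finset
open scoped Real Nat

theorem iteratedDeriv_cexp_const_mul_mul_zero_div_factorial {g : ℂ → ℂ}
    (hg : AnalyticAt ℂ g 0) (c : ℂ) (n : ℕ) :
    iteratedDeriv n (fun w => exp (c * w) * g w) 0 / n ! =
      ∑ i ∈ range (n + 1), c ^ i / i ! * (iteratedDeriv (n - i) g 0 / (n - i)!) := by
  have hexp : ContDiffAt ℂ n (fun w => exp (c * w)) 0 := by fun_prop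
  rw [iteratedDeriv_fun_mul hexp hg.contDiffAt, sum_div]
  refine sum_congr rfl fun i hi => ?_
  have hin : i ≤ n := Nat.lt_succ_iff.1 (mem_range.1 hi)
  have hfac : (n ! : ℂ) ≠ 0 := mod_cast n.factorial_ne_zero
  rw [iteratedDeriv_cexp_const_mul, Nat.cast_choose ℂ hin]
  simp only [mul_zero, exp_zero, mul_one]
  field_simp

theorem circleIntegral_cexp_const_mul_mul_div_pow_succ {g : ℂ → ℂ} {R : ℝ} (hR : 0 < R)
    (hg : DifferentiableOn ℂ g (closedBall 0 R)) (c : ℂ) (n : ℕ) :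
    1 / (2 * π * I) * ∮ w in C(0, R), exp (c * w) * g w / w ^ (n + 1) =
      ∑ i ∈ range (n + 1), c ^ i / i ! * (iteratedDeriv (n - i) g 0 / (n - i)!) := by
  have hf : DifferentiableOn ℂ (fun w => exp (c * w) * g w) (closedBall 0 R) := by fun_prop
  have hcauchy := hf.circleIntegral_one_div_sub_center_pow_smul hR n
  simp only [sub_zero, smul_eq_mul] at hcauchy
  have hintegrand : (fun w => exp (c * w) * g w / w ^ (n + 1)) =
      fun w => 1 / w ^ (n + 1) * (exp (c * w) * g w) := by
    ext w; ring
  rw [← iteratedDeriv_cexp_const_mul_mul_zero_div_factorial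
    (hg.analyticAt (closedBall_mem_nhds 0 hR)), hintegrand, hcauchy]
  field_simp [two_pi_I_ne_zero]

end CauchyFormula

theorem Qn_is_polynomial (n : ℕ) (hn : 1 ≤ n) (ε : ℝ) (hε0 : 0 < ε) (hε1 : ε < 1) :
    ∃ q : ℂ[X], q.degree = (n : ℕ) ∧
      q.leadingCoeff = (-1 : ℂ) ^ (n + 1) * (3 * (n : ℂ)) ^ n / (n.factorial : ℂ) ∧
      ∀ z : ℂ,
        (1 / (2 * Real.pi * Complex.I)) *
          (∮ w in C(0, ε), Complex.exp (3 * (n : ℂ) * z * w) / (w * (w ^ 2 - 1)) ^ (n + 1)) =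
        q.eval z := by
  set g : ℂ → ℂ := fun w => ((w ^ 2 - 1) ^ (n + 1))⁻¹
  set b : ℕ → ℂ := fun i =>
    (3 * n) ^ i / i.factorial * (iteratedDeriv (n - i) g 0 / (n - i).factorial)
  have hg : DifferentiableOn ℂ g (Metric.closedBall 0 ε) := by
    refine DifferentiableOn.inv (by fun_prop) fun w hw => pow_ne_zero _ ?_
    exact sq_sub_one_ne_zero_of_norm_lt_one ((mem_closedBall_zero_iff.1 hw).trans_lt hε1)
  have hbn : b n = (-1 : ℂ) ^ (n + 1) * (3 * (n : ℂ)) ^ n / (n.factorial : ℂ) := by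
    simp only [b, g, Nat.sub_self, iteratedDeriv_zero, Nat.factorial_zero]
    norm_num [← inv_pow]
    ring
  have hbn0 : b n ≠ 0 := by
    rw [hbn]
    simp [Nat.one_le_iff_ne_zero.1 hn, Nat.factorial_ne_zero]
  refine ⟨∑ i ∈ Finset.range (n + 1), C (b i) * X ^ i, degree_sum_range_C_mul_X_pow hbn0,
    (leadingCoeff_sum_range_C_mul_X_pow hbn0).trans hbn, fun z => ?_⟩
  have hintegrand : (fun w => Complex.exp (3 * (n : ℂ) * z * w) / (w * (w ^ 2 - 1)) ^ (n + 1)) =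
      fun w => Complex.exp (3 * n * z * w) * g w / w ^ (n + 1) := by
    ext w; simp only [g, div_eq_mul_inv, mul_pow, mul_inv]; ring
  rw [hintegrand, circleIntegral_cexp_const_mul_mul_div_pow_succ hε0 hg, eval_finsetSum]
  refine Finset.sum_congr rfl fun i _ => ?_
  simp only [b, eval_mul, eval_C, eval_pow, eval_X]
  ring
end

section
/- There do not exist real numbers y, u, v with y > 0 such that, as polynomials in X over ℂ, (iy)·X³ − X² − (iy)·X + 1/3 = (iy)·(X + u + iv)·(X + iv)·(X − u + iv). -/
open Polynomial

theorem no_common_imaginary_part : ¬ ∃ (y u v : ℝ), 0 < y ∧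
    (C ((y : ℂ) * Complex.I) * X ^ 3 - X ^ 2 - C ((y : ℂ) * Complex.I) * X + C (1 / 3 : ℂ) =
      C ((y : ℂ) * Complex.I) *
        (X + C ((u : ℂ) + (v : ℂ) * Complex.I)) *
        (X + C ((v : ℂ) * Complex.I)) *
        (X - C ((u : ℂ) - (v : ℂ) * Complex.I))) := by
  rintro ⟨y, u, v, hy, h⟩
  have key : ∀ a b c d : ℂ, C a * (X + C b) * (X + C c) * (X - C d) =
      C a * X^3 + C (a*(b+c-d)) * X^2 + C (a*(b*c - b*d - c*d)) * X + C (-(a*b*c*d)) := by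
    intro a b c d
    simp only [map_mul, map_add, map_sub, map_neg]
    ring
  rw [key] at h
  have h2 := congrArg (fun p => p.coeff 2) h
  have h1 := congrArg (fun p => p.coeff 1) h
  have h0 := congrArg (fun p => p.coeff 0) h
  simp only [coeff_add, coeff_sub, coeff_C_mul, coeff_X_pow, coeff_C, coeff_X, coeff_X_pow] at h2 h1 h0
  norm_num at h2 h1 h0
  rw [Complex.ext_iff] at h2 h1 h0
  simp [Complex.mul_re, Complex.mul_im, Complex.add_re, Complex.add_im] at h2 h1 h0
  obtain ⟨-, h1⟩ := h1
  obtain ⟨h0, -⟩ := h0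
  have hyv : y * v = 1 / 3 := by linarith
  have hsum : v ^ 2 + u ^ 2 = 1 := by nlinarith [h0, hyv]
  have h1' : y * (3 * v ^ 2 + u ^ 2) = y * 1 := by ring_nf; ring_nf at h1; linarith
  have hsum2 : 3 * v ^ 2 + u ^ 2 = 1 := by
    have := mul_left_cancel₀ (ne_of_gt hy) h1'
    linarith
  have hv : v = 0 := by nlinarith [sq_nonneg v]
  rw [hv, mul_zero] at hyv
  norm_num at hyv
end

section
/- Let a ∈ {−1, 0, 1} and let R₀ > 0. Suppose w is a ℂ-valued function defined for all z ∈ ℂ with |z| > R₀, satisfying z·w(z)³ − w(z)² − z·w(z) + 1/3 = 0 for all such z, and suppose w(z) → a as z → ∞ (i.e. along the filter of complements of bounded sets in ℂ). Then z·(w(z) − a) → 1/3 as z → ∞. -/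
open Filter Topology

/-! Since `a ^ 3 = a`, the cubic factors as
`z * (w - a) * (w ^ 2 + a * w + a ^ 2 - 1) = w ^ 2 - 1 / 3`.
As `w → a` the second factor tends to `3 * a ^ 2 - 1 ≠ 0` and the right side to
`a ^ 2 - 1 / 3`, so `z * (w - a)` tends to their ratio, which is `1 / 3`. -/

theorem Filter.Tendsto.of_eventually_mul_eq {α 𝕜 : Type*} [NontriviallyNormedField 𝕜]
    {l : Filter α} {u g h : α → 𝕜} {G H : 𝕜} (hg : Tendsto g l (𝓝 G)) (hG : G ≠ 0)
    (hh : Tendsto h l (𝓝 H)) (heq : ∀ᶠ x in l, u x * g x = h x) :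
    Tendsto u l (𝓝 (H / G)) := by
  refine (hh.div hg hG).congr' ?_
  filter_upwards [heq, hg.eventually_ne hG] with x hx hgx
  rw [Pi.div_apply, div_eq_iff hgx, hx]

theorem branch_asymptotics_at_infinity_general (a : ℂ) (ha : a = -1 ∨ a = 0 ∨ a = 1)
    (R₀ : ℝ) (w : ℂ → ℂ)
    (hcubic : ∀ z : ℂ, R₀ < ‖z‖ →
      z * w z ^ 3 - w z ^ 2 - z * w z + 1 / 3 = 0)
    (hlim : Tendsto w (Bornology.cobounded ℂ) (nhds a)) :
    Tendsto (fun z : ℂ => z * (w z - a)) (Bornology.cobounded ℂ) (nhds (1 / 3)) := by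
  have ha3 : a ^ 3 = a := by rcases ha with rfl | rfl | rfl <;> norm_num
  have hG : 3 * a ^ 2 - 1 ≠ 0 := by rcases ha with rfl | rfl | rfl <;> norm_num
  have hfactor : ∀ᶠ z in Bornology.cobounded ℂ,
      z * (w z - a) * (w z ^ 2 + a * w z + a ^ 2 - 1) = w z ^ 2 - 1 / 3 := by
    filter_upwards [tendsto_norm_cobounded_atTop.eventually_gt_atTop R₀] with z hz
    linear_combination hcubic z hz - z * ha3
  have hg : Tendsto (fun z => w z ^ 2 + a * w z + a ^ 2 - 1) (Bornology.cobounded ℂ)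
      (𝓝 (3 * a ^ 2 - 1)) := by
    convert ((hlim.pow 2).add (hlim.const_mul a)).add_const (a ^ 2 - 1) using 2 <;> ring
  have hratio : (a ^ 2 - 1 / 3) / (3 * a ^ 2 - 1) = 1 / 3 := by
    rw [div_eq_iff hG]; ring
  simpa only [hratio] using hg.of_eventually_mul_eq hG ((hlim.pow 2).sub_const (1 / 3)) hfactor

theorem branch_asymptotics_at_infinity (a : ℂ) (ha : a = -1 ∨ a = 0 ∨ a = 1)
    (R₀ : ℝ) (hR₀ : 0 < R₀) (w : ℂ → ℂ)
    (hcubic : ∀ z : ℂ, R₀ < ‖z‖ →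
      z * w z ^ 3 - w z ^ 2 - z * w z + 1 / 3 = 0)
    (hlim : Tendsto w (Bornology.cobounded ℂ) (nhds a)) :
    Tendsto (fun z : ℂ => z * (w z - a)) (Bornology.cobounded ℂ) (nhds (1 / 3)) :=
  branch_asymptotics_at_infinity_general a ha R₀ w hcubic hlim
end

section
/- Let r > 0 and suppose w is a ℂ-valued function defined for all z ∈ ℂ with 0 < |z| < r, satisfying z·w(z)³ − w(z)² − z·w(z) + 1/3 = 0 for all such z, and suppose |w(z)| → ∞ as z → 0 with z ≠ 0. Then z·w(z) → 1 as z → 0 with z ≠ 0. -/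
/-!
Dividing the cubic by `w²` gives `z * w = 1 + z * w⁻¹ - w⁻² / 3`. Since `‖w‖ → ∞`, `w⁻¹ → 0`,
and the right-hand side tends to `1` as `z → 0`.
-/

open Filter Topology

theorem mul_eq_of_cubic_eq_zero {K : Type*} [Field K] {z w : K} (hw : w ≠ 0)
    (h : z * w ^ 3 - w ^ 2 - z * w + 1 / 3 = 0) :
    z * w = 1 + z * w⁻¹ - 1 / 3 * w⁻¹ ^ 2 := by
  field_simp
  linear_combination h

theorem eventually_pos_norm_lt_nhdsNE {E : Type*} [NormedAddCommGroup E] {r : ℝ} (hr : 0 < r) :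
    ∀ᶠ z in 𝓝[≠] (0 : E), 0 < ‖z‖ ∧ ‖z‖ < r := by
  filter_upwards [self_mem_nhdsWithin,
    nhdsWithin_le_nhds (tendsto_norm_zero.eventually (gt_mem_nhds hr))] with z hz hzr
  exact ⟨norm_pos_iff.2 hz, hzr⟩

theorem psiQ_pole_at_origin (r : ℝ) (hr : 0 < r) (w : ℂ → ℂ)
    (hcubic : ∀ z : ℂ, 0 < ‖z‖ → ‖z‖ < r →
      z * w z ^ 3 - w z ^ 2 - z * w z + 1 / 3 = 0)
    (hlim : Tendsto (fun z : ℂ => ‖w z‖) (nhdsWithin 0 {(0 : ℂ)}ᶜ) atTop) :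
    Tendsto (fun z : ℂ => z * w z) (nhdsWithin 0 {(0 : ℂ)}ᶜ) (nhds 1) := by
  have hinv : Tendsto (fun z => (w z)⁻¹) (𝓝[≠] 0) (𝓝 0) :=
    tendsto_inv₀_cobounded.comp (tendsto_norm_atTop_iff_cobounded.1 hlim)
  have hz : Tendsto (fun z : ℂ => z) (𝓝[≠] 0) (𝓝 0) := nhdsWithin_le_nhds
  have hrhs : Tendsto (fun z => 1 + z * (w z)⁻¹ - 1 / 3 * (w z)⁻¹ ^ 2) (𝓝[≠] 0) (𝓝 1) := by
    have := ((tendsto_const_nhds (x := (1 : ℂ))).add (hz.mul hinv)).sub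
      ((hinv.pow 2).const_mul (1 / 3 : ℂ))
    simpa using this
  refine hrhs.congr' ?_
  filter_upwards [eventually_pos_norm_lt_nhdsNE hr, hlim.eventually_gt_atTop 0]
    with z ⟨hz0, hzr⟩ hw
  exact (mul_eq_of_cubic_eq_zero (norm_pos_iff.1 hw) (hcubic z hz0 hzr)).symm
end

section
/- Let z ∈ ℂ with z ≠ 0 and let w ∈ ℂ. Then w satisfies both z·w³ − w² − z·w + 1/3 = 0 and 3z·w² − 2w − z = 0 (i.e. w is a multiple root of the cubic z·X³ − X² − z·X + 1/3) if and only if 3w⁴ + 1 = 0 and z = (w² − 1/3)/(w(w² − 1)). -/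
theorem multiple_root_iff_branch_point (z w : ℂ) (hz : z ≠ 0) :
    (z * w ^ 3 - w ^ 2 - z * w + 1 / 3 = 0 ∧ 3 * z * w ^ 2 - 2 * w - z = 0) ↔
    (3 * w ^ 4 + 1 = 0 ∧ z = (w ^ 2 - 1 / 3) / (w * (w ^ 2 - 1))) := by
  constructor
  · rintro ⟨h1, h2⟩
    have hw : w ≠ 0 := by
      rintro rfl
      apply hz
      linear_combination -h2
    have hq : 3 * w ^ 4 + 1 = 0 := by
      linear_combination (3 - 9 * w ^ 2) * h1 + (3 * w ^ 3 - 3 * w) * h2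
    have hw1 : w ^ 2 - 1 ≠ 0 := by
      intro h
      have : (4 : ℂ) = 0 := by linear_combination hq - (3 * w ^ 2 + 3) * h
      norm_num at this
    refine ⟨hq, ?_⟩
    field_simp
    linear_combination 3 * h1
  · rintro ⟨hq, hz2⟩
    have hw : w ≠ 0 := by
      rintro rfl
      norm_num at hq
    have hw1 : w ^ 2 - 1 ≠ 0 := by
      intro h
      have : (4 : ℂ) = 0 := by linear_combination hq - (3 * w ^ 2 + 3) * h
      norm_num at this
    subst hz2
    constructor
    · field_simp
      ring
    · field_simp
      linear_combination hq
end

section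
/- For every real number y ≠ 0, the polynomial (iy)·X³ − X² − (iy)·X + 1/3 ∈ ℂ[X] has three pairwise distinct roots, exactly one of which has real part equal to 0, exactly one of which has real part strictly negative, and exactly one of which has real part strictly positive. -/
theorem roots_distribution_on_imaginary_axis (y : ℝ) (hy : y ≠ 0) :
    ∃ a b c : ℂ, a ≠ b ∧ a ≠ c ∧ b ≠ c ∧
      (∀ X : ℂ, ((y : ℂ) * Complex.I) * X ^ 3 - X ^ 2 - ((y : ℂ) * Complex.I) * X + 1 / 3 =
        ((y : ℂ) * Complex.I) * (X - a) * (X - b) * (X - c)) ∧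
      a.re = 0 ∧ b.re < 0 ∧ 0 < c.re := by
  -- get a real root t of the real cubic
  obtain ⟨t, h⟩ : ∃ t : ℝ, y*t^3 + t^2 + y*t + 1/3 = 0 := by
    have hc : ContinuousOn (fun t : ℝ => y*t^3 + t^2 + y*t + 1/3) (Set.uIcc 0 (-1/y)) := by
      fun_prop
    have h0 : (0:ℝ) ∈ Set.uIcc (y*0^3 + 0^2 + y*0 + 1/3)
        (y*(-1/y)^3 + (-1/y)^2 + y*(-1/y) + 1/3) := by
      have e : y*(-1/y)^3 + (-1/y)^2 + y*(-1/y) + 1/3 = -2/3 := by field_simp; ring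
      rw [e]; norm_num [Set.mem_uIcc]
    obtain ⟨x, _, hx⟩ := intermediate_value_uIcc hc h0
    exact ⟨x, hx⟩
  have ht0 : t ≠ 0 := by rintro rfl; norm_num at h
  set s : ℝ := t + 1/y with hs
  set D : ℝ := (3*y^2*t^2+1)/(3*y^2*t^2) with hD
  have hDpos : 0 < D := by positivity
  set r : ℝ := Real.sqrt D with hrdef
  have hrpos : 0 < r := Real.sqrt_pos.mpr hDpos
  have hr2 : r^2 = D := Real.sq_sqrt hDpos.le
  have hr2' : 3*y^2*t^2*r^2 = 3*y^2*t^2 + 1 := by rw [hr2, hD]; field_simp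
  have hs' : y*s = y*t + 1 := by rw [hs]; field_simp
  have hC := congrArg (Complex.ofReal) h; push_cast at hC
  have hsC := congrArg (Complex.ofReal) hs'; push_cast at hsC
  have hr2C := congrArg (Complex.ofReal) hr2'; push_cast at hr2C
  have hI : Complex.I^2 = -1 := Complex.I_sq
  refine ⟨(t:ℂ)*Complex.I, (-(r:ℂ) - (s:ℂ)*Complex.I)/2, ((r:ℂ) - (s:ℂ)*Complex.I)/2,
    ?_, ?_, ?_, ?_, ?_, ?_, ?_⟩
  · intro hab
    have := congrArg Complex.re hab
    simp at this
    linarith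
  · intro hac
    have := congrArg Complex.re hac
    simp at this
    linarith
  · intro hbc
    have := congrArg Complex.re hbc
    simp at this
    linarith
  · -- factorization
    have hM : (12*(y:ℂ)^2*(t:ℂ)^2) ≠ 0 :=
      mul_ne_zero (mul_ne_zero (by norm_num) (pow_ne_zero 2 (Complex.ofReal_ne_zero.mpr hy)))
        (pow_ne_zero 2 (Complex.ofReal_ne_zero.mpr ht0))
    have ce1 : (y:ℂ)*Complex.I*((t:ℂ)*Complex.I + (-(r:ℂ) - (s:ℂ)*Complex.I)/2
        + ((r:ℂ) - (s:ℂ)*Complex.I)/2) = 1 := by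
      linear_combination ((y:ℂ)*((t:ℂ)-(s:ℂ)))*hI + hsC
    have ce2 : (y:ℂ)*Complex.I*(((t:ℂ)*Complex.I)*((-(r:ℂ) - (s:ℂ)*Complex.I)/2)
        + ((t:ℂ)*Complex.I)*(((r:ℂ) - (s:ℂ)*Complex.I)/2)
        + ((-(r:ℂ) - (s:ℂ)*Complex.I)/2)*(((r:ℂ) - (s:ℂ)*Complex.I)/2))
        = -((y:ℂ)*Complex.I) := by
      apply mul_left_cancel₀ hM
      linear_combination ((-(12*(y:ℂ)^3*(t:ℂ)^3*(s:ℂ)) + 3*(y:ℂ)^3*(t:ℂ)^2*(s:ℂ)^2)*Complex.I)*hI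
        + ((y:ℂ)*Complex.I*(12*(y:ℂ)*(t:ℂ)^3 - 3*(t:ℂ)^2*((y:ℂ)*(s:ℂ)+(y:ℂ)*(t:ℂ)+1)))*hsC
        + (-(y:ℂ)*Complex.I)*hr2C + ((y:ℂ)*Complex.I*(9*(y:ℂ)*(t:ℂ)-3))*hC
    have ce3 : (y:ℂ)*Complex.I*(((t:ℂ)*Complex.I)*((-(r:ℂ) - (s:ℂ)*Complex.I)/2)
        *(((r:ℂ) - (s:ℂ)*Complex.I)/2)) = -(1/3) := by
      apply mul_left_cancel₀ hM
      linear_combination (-(3*(y:ℂ)^3*(t:ℂ)^3*((r:ℂ)^2+(s:ℂ)^2)) + 3*(y:ℂ)^3*(t:ℂ)^3*(s:ℂ)^2*Complex.I^2)*hI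
        + ((y:ℂ)*(t:ℂ))*hr2C + (3*(y:ℂ)*(t:ℂ)^3*((y:ℂ)*(s:ℂ)+(y:ℂ)*(t:ℂ)+1))*hsC
        + (3*(y:ℂ)^2*(t:ℂ)^2 + 3*(y:ℂ)*(t:ℂ))*hC
    intro X
    linear_combination X^2*ce1 - X*ce2 + ce3
  · simp
  · -- b.re < 0
    have : ((-(r:ℂ) - (s:ℂ)*Complex.I)/2).re = -r/2 := by simp
    rw [this]; linarith
  · have : (((r:ℂ) - (s:ℂ)*Complex.I)/2).re = r/2 := by simp
    rw [this]; linarith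
end
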